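/- arXiv:1402.5331 — 8 statements merged into one kernel-verified Lean document; each statement's English description precedes it below -/
import Mathlib

section
/- A finite simple graph G has an f-coloring if and only if there exists a common denominator N of f such that G has an (f,N)-coloring. -/
open MeasureTheory

/-- `φ` is an `f`-coloring of `G`: it assigns to each vertex a measurable subset of `[0,1]`,
adjacent vertices get disjoint sets, and the set of `v` has measure at least `f v`. -/
def IsFracColoring {V : Type*} (G : SimpleGraph V) (f : V → ℚ) (φ : V → Set ℝ) : Prop :=
  (∀ v, φ v ⊆ Set.Icc (0 : ℝ) 1) ∧
  (∀ v, MeasurableSet (φ v)) ∧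
  (∀ u v, G.Adj u v → φ u ∩ φ v = ∅) ∧
  (∀ v, ENNReal.ofReal ((f v : ℝ)) ≤ volume (φ v))

/-- A tight `f`-coloring: the measure of each `φ v` equals `f v`. -/
def IsTightFracColoring {V : Type*} (G : SimpleGraph V) (f : V → ℚ) (φ : V → Set ℝ) : Prop :=
  IsFracColoring G f φ ∧ ∀ v, volume (φ v) = ENNReal.ofReal ((f v : ℝ))

/-- `N ≥ 1` is a common denominator of `f` if `N * f v` is an integer for every `v`. -/
def IsCommonDenom {V : Type*} (N : ℕ) (f : V → ℚ) : Prop :=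
  1 ≤ N ∧ ∀ v, ∃ m : ℤ, (N : ℚ) * f v = (m : ℚ)

/-- `ψ` is an `(f,N)`-coloring of `G`: each vertex gets a subset of `{1,…,N}`,
adjacent vertices get disjoint sets, and `|ψ v| ≥ N * f v` for every vertex `v`. -/
def IsFNColoring {V : Type*} (G : SimpleGraph V) (f : V → ℚ) (N : ℕ) (ψ : V → Finset ℕ) : Prop :=
  (∀ v, ψ v ⊆ Finset.Icc 1 N) ∧
  (∀ u v, G.Adj u v → Disjoint (ψ u) (ψ v)) ∧
  (∀ v, (N : ℚ) * f v ≤ ((ψ v).card : ℚ))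

/-- A tight `(f,N)`-coloring: `|ψ v| = N * f v` for every vertex `v`. -/
def IsTightFNColoring {V : Type*} (G : SimpleGraph V) (f : V → ℚ) (N : ℕ)
    (ψ : V → Finset ℕ) : Prop :=
  IsFNColoring G f N ψ ∧ ∀ v, ((ψ v).card : ℚ) = (N : ℚ) * f v

/-!
For an `f`-coloring `φ`, the points `x` whose set of colours `{u | x ∈ φ u}` is a given set `S`
form a measurable set, empty unless `S` is independent; the measures `w S` of these sets give a
real solution of the linear system `w ≥ 0`, `∑ S, w S ≤ 1`, `∑_{S ∋ v independent} w S ≥ f v`,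
whose data are rational. Fourier–Motzkin elimination shows that such a system also has a rational
solution `q`. If `N` is a common denominator of `q` and `f`, giving each independent set `S` its own
block of `N * q S` of the colours `1, …, N` is an `(f,N)`-coloring. Conversely, colour `i` of an
`(f,N)`-coloring becomes the interval `((i - 1) / N, i / N]`.
-/

open Function

theorem Finite.exists_between_of_forall_le {α β γ : Type*} [LinearOrder α] [Nonempty α] [Finite β]
    [Finite γ] (l : β → α) (u : γ → α) (h : ∀ i j, l i ≤ u j) :
    ∃ y, (∀ i, l i ≤ y) ∧ ∀ j, y ≤ u j := by
  rcases isEmpty_or_nonempty β with hβ | hβ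
  · rcases isEmpty_or_nonempty γ with hγ | hγ
    · exact ⟨Classical.arbitrary α, isEmptyElim, isEmptyElim⟩
    · obtain ⟨j₀, hj₀⟩ := Finite.exists_min u
      exact ⟨u j₀, isEmptyElim, hj₀⟩
  · obtain ⟨i₀, hi₀⟩ := Finite.exists_max l
    exact ⟨l i₀, hi₀, h i₀⟩

def IsSolution {κ ι K : Type*} [Fintype ι] [DivisionRing K] [LE K] (c : κ → ι → ℚ) (b : κ → ℚ)
    (x : ι → K) : Prop :=
  ∀ k, (b k : K) ≤ ∑ i, (c k i : K) * x i

section LinearInequalities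

variable {κ ι K : Type*} [Field K] [LinearOrder K]

theorem isSolution_comp_equiv_iff {ι' : Type*} [Fintype ι] [Fintype ι'] {c : κ → ι → ℚ}
    {b : κ → ℚ} {x : ι → K} (e : ι' ≃ ι) :
    IsSolution (fun k j => c k (e j)) b (x ∘ e) ↔ IsSolution c b x :=
  forall_congr' fun k => by simp only [Function.comp_apply, e.sum_comp fun i => (c k i : K) * x i]

variable [IsStrictOrderedRing K]

namespace FourierMotzkin

variable {n : ℕ} (c : κ → Fin (n + 1) → ℚ) (b : κ → ℚ)

/-- Eliminating `x 0` keeps the inequalities not involving `x 0` and combines each lower bound on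
`x 0` with each upper bound. -/
abbrev ElimIndex := {k // c k 0 = 0} ⊕ ({k // 0 < c k 0} × {k // c k 0 < 0})

def elimCoeff : ElimIndex c → Fin n → ℚ
  | .inl k, i => c k i.succ
  | .inr (k, l), i => c k i.succ / c k 0 - c l i.succ / c l 0

def elimConst : ElimIndex c → ℚ
  | .inl k => b k
  | .inr (k, l) => b k / c k 0 - b l / c l 0

def bound (k : κ) (y : Fin n → K) : K :=
  ((b k : K) - ∑ i, (c k i.succ : K) * y i) / c k 0

variable {c b}

theorem sum_mul_cons {R : Type*} [DivisionRing R] (k : κ) (x₀ : R) (y : Fin n → R) :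
    ∑ i, (c k i : R) * (Fin.cons x₀ y : Fin (n + 1) → R) i =
      c k 0 * x₀ + ∑ i, (c k i.succ : R) * y i := by
  simp [Fin.sum_univ_succ]

theorem bound_le_iff {k : κ} (hk : 0 < c k 0) {x₀ : K} {y : Fin n → K} :
    bound c b k y ≤ x₀ ↔ (b k : K) ≤ ∑ i, (c k i : K) * (Fin.cons x₀ y : Fin (n + 1) → K) i := by
  rw [bound, div_le_iff₀ (by exact_mod_cast hk), sum_mul_cons]
  constructor <;> intro h <;> linarith

theorem le_bound_iff {k : κ} (hk : c k 0 < 0) {x₀ : K} {y : Fin n → K} :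
    x₀ ≤ bound c b k y ↔ (b k : K) ≤ ∑ i, (c k i : K) * (Fin.cons x₀ y : Fin (n + 1) → K) i := by
  rw [bound, le_div_iff_of_neg (by exact_mod_cast hk), sum_mul_cons]
  constructor <;> intro h <;> linarith

theorem elim_pair_iff (k : {k // 0 < c k 0}) (l : {k // c k 0 < 0}) (y : Fin n → K) :
    (elimConst c b (.inr (k, l)) : K) ≤ ∑ i, (elimCoeff c (.inr (k, l)) i : K) * y i ↔
      bound c b k y ≤ bound c b l y := by
  simp only [elimConst, elimCoeff, bound, Rat.cast_sub, Rat.cast_div, sub_mul, div_mul_eq_mul_div,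
    Finset.sum_sub_distrib, ← Finset.sum_div, sub_div]
  constructor <;> intro h <;> linarith

theorem exists_isSolution_cons_iff [Finite κ] (y : Fin n → K) :
    (∃ x₀, IsSolution c b (Fin.cons x₀ y : Fin (n + 1) → K)) ↔
      IsSolution (elimCoeff c) (elimConst c b) y := by
  constructor
  · rintro ⟨x₀, hx⟩ (k | ⟨k, l⟩)
    · simpa [elimCoeff, elimConst, sum_mul_cons, k.2] using hx k
    · exact (elim_pair_iff k l y).2
        (((bound_le_iff k.2).2 (hx k)).trans ((le_bound_iff l.2).2 (hx l)))
  · intro hy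
    obtain ⟨x₀, hlower, hupper⟩ := Finite.exists_between_of_forall_le
      (fun k : {k // 0 < c k 0} => bound c b k y) (fun l : {k // c k 0 < 0} => bound c b l y)
      (fun k l => (elim_pair_iff k l y).1 (hy (.inr (k, l))))
    refine ⟨x₀, fun k => ?_⟩
    rcases lt_trichotomy (c k 0) 0 with hk | hk | hk
    · exact (le_bound_iff hk).1 (hupper ⟨k, hk⟩)
    · simpa [elimCoeff, elimConst, sum_mul_cons, hk] using hy (.inl ⟨k, hk⟩)
    · exact (bound_le_iff hk).1 (hlower ⟨k, hk⟩)

end FourierMotzkin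

open FourierMotzkin in
theorem IsSolution.exists_rat_of_fin [Fintype κ] {n : ℕ} {c : κ → Fin n → ℚ} {b : κ → ℚ}
    {x : Fin n → K} (hx : IsSolution c b x) : ∃ q : Fin n → ℚ, IsSolution c b q := by
  induction n generalizing κ with
  | zero => exact ⟨0, fun k => by simpa [IsSolution] using hx k⟩
  | succ n ih =>
    have hred := (exists_isSolution_cons_iff (Fin.tail x)).1 ⟨x 0, by rwa [Fin.cons_self_tail]⟩
    obtain ⟨q, hq⟩ := ih hred
    obtain ⟨q₀, hq₀⟩ := (exists_isSolution_cons_iff q).2 hq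
    exact ⟨_, hq₀⟩

theorem IsSolution.exists_rat [Fintype κ] [Fintype ι] {c : κ → ι → ℚ} {b : κ → ℚ} {x : ι → K}
    (hx : IsSolution c b x) : ∃ q : ι → ℚ, IsSolution c b q := by
  let e := (Fintype.equivFin ι).symm
  obtain ⟨q, hq⟩ := ((isSolution_comp_equiv_iff e).2 hx).exists_rat_of_fin
  refine ⟨q ∘ e.symm, (isSolution_comp_equiv_iff e).1 ?_⟩
  rwa [Function.comp_assoc, e.symm_comp_self, Function.comp_id]

end LinearInequalities

section FracCover

variable {V ι K : Type*} [Fintype ι]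

def IsFracCover [Field K] [LinearOrder K] (cov : V → Finset ι) (f : V → ℚ) (w : ι → K) : Prop :=
  (∀ i, 0 ≤ w i) ∧ ∑ i, w i ≤ 1 ∧ ∀ v, (f v : K) ≤ ∑ i ∈ cov v, w i

def fracCoverConst (f : V → ℚ) : ι ⊕ Option V → ℚ
  | .inl _ => 0
  | .inr none => -1
  | .inr (some v) => f v

variable [DecidableEq ι]

def fracCoverCoeff (cov : V → Finset ι) : ι ⊕ Option V → ι → ℚ
  | .inl i, j => if j = i then 1 else 0
  | .inr none, _ => -1
  | .inr (some v), j => if j ∈ cov v then 1 else 0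

variable [Field K] [LinearOrder K] [IsStrictOrderedRing K] {cov : V → Finset ι} {f : V → ℚ}

theorem isFracCover_iff_isSolution {w : ι → K} :
    IsFracCover cov f w ↔ IsSolution (fracCoverCoeff cov) (fracCoverConst f) w := by
  simp [IsFracCover, IsSolution, fracCoverCoeff, fracCoverConst, Sum.forall, Option.forall,
    apply_ite, ite_mul, Finset.sum_ite_mem]

theorem IsFracCover.exists_rat [Fintype V] {w : ι → K} (hw : IsFracCover cov f w) :
    ∃ q : ι → ℚ, IsFracCover cov f q := by
  obtain ⟨q, hq⟩ := (isFracCover_iff_isSolution.1 hw).exists_rat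
  exact ⟨q, isFracCover_iff_isSolution.2 hq⟩

end FracCover

theorem Finset.exists_pairwise_disjoint_subsets_card_eq {α ι : Type*} [Fintype ι] (T : Finset α)
    (m : ι → ℕ) (h : ∑ i, m i ≤ T.card) :
    ∃ B : ι → Finset α, (∀ i, B i ⊆ T) ∧ Pairwise (Disjoint on B) ∧ ∀ i, (B i).card = m i := by
  obtain ⟨e⟩ : Nonempty ((Σ i, Fin (m i)) ↪ T) :=
    Function.Embedding.nonempty_of_card_le (by simpa using h)
  let B i := Finset.univ.map
    ((Function.Embedding.sigmaMk i).trans (e.trans (Function.Embedding.subtype _)))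
  refine ⟨B, fun i a ha => ?_, fun i j hij => ?_, fun i => by simp [B]⟩
  · obtain ⟨x, -, rfl⟩ := Finset.mem_map.1 ha
    exact (e _).2
  · rw [Function.onFun, Finset.disjoint_left]
    rintro _ ha hb
    obtain ⟨x, -, rfl⟩ := Finset.mem_map.1 ha
    obtain ⟨y, -, hy⟩ := Finset.mem_map.1 hb
    exact hij (congrArg Sigma.fst (e.injective (Subtype.val_injective hy))).symm

theorem exists_isCommonDenom {ι : Type*} [Fintype ι] (g : ι → ℚ) : ∃ N, IsCommonDenom N g := by
  refine ⟨∏ i, (g i).den, Nat.one_le_iff_ne_zero.2 (Finset.prod_ne_zero_iff.2 fun i _ =>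
    (g i).den_ne_zero), fun i => ?_⟩
  obtain ⟨d, hd⟩ := Finset.dvd_prod_of_mem (fun i => (g i).den) (Finset.mem_univ i)
  refine ⟨d * (g i).num, ?_⟩
  push_cast [hd]
  rw [← Rat.mul_den_eq_num]
  ring

section Coloring

variable {V : Type*} {G : SimpleGraph V} {f : V → ℚ}

theorem pairwise_disjoint_Ioc_natCast_div {N : ℕ} (hN : 0 < N) :
    Pairwise (Disjoint on fun i : ℕ => Set.Ioc (((i : ℝ) - 1) / N) (i / N)) := by
  have hN' : (0 : ℝ) < N := by exact_mod_cast hN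
  have ceil_eq : ∀ (i : ℕ) {x : ℝ}, x ∈ Set.Ioc (((i : ℝ) - 1) / N) (i / N) → ⌈(N : ℝ) * x⌉ = i :=
    fun i x hx => Int.ceil_eq_iff.2 ⟨by simpa [div_lt_iff₀' hN'] using hx.1,
      by simpa [le_div_iff₀' hN'] using hx.2⟩
  intro i j hij
  refine Set.disjoint_left.2 fun x hi hj => hij ?_
  exact_mod_cast (ceil_eq i hi).symm.trans (ceil_eq j hj)

theorem IsFNColoring.exists_isFracColoring {N : ℕ} (hN : 1 ≤ N) {ψ : V → Finset ℕ}
    (hψ : IsFNColoring G f N ψ) : ∃ φ, IsFracColoring G f φ := by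
  obtain ⟨hsub, hdisj, hcard⟩ := hψ
  have hN' : (0 : ℝ) < N := by exact_mod_cast hN
  set I : ℕ → Set ℝ := fun i => Set.Ioc (((i : ℝ) - 1) / N) (i / N)
  have hI : Pairwise (Disjoint on I) := pairwise_disjoint_Ioc_natCast_div hN
  refine ⟨fun v => ⋃ i ∈ ψ v, I i, fun v => ?_, fun v => ?_, fun u v huv => ?_, fun v => ?_⟩
  · refine Set.iUnion₂_subset fun i hi => Set.Ioc_subset_Icc_self.trans (Set.Icc_subset_Icc ?_ ?_)
    · have : (1 : ℝ) ≤ i := by exact_mod_cast (Finset.mem_Icc.1 (hsub v hi)).1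
      exact div_nonneg (by linarith) hN'.le
    · exact div_le_one_of_le₀ (by exact_mod_cast (Finset.mem_Icc.1 (hsub v hi)).2) hN'.le
  · exact (ψ v).measurableSet_biUnion fun i _ => measurableSet_Ioc
  · rw [← Set.disjoint_iff_inter_eq_empty, Set.disjoint_iUnion₂_left]
    refine fun i hi => Set.disjoint_iUnion₂_right.2 fun j hj => hI ?_
    rintro rfl
    exact Finset.disjoint_left.1 (hdisj u v huv) hi hj
  · have hvol : ∀ i, volume (I i) = ENNReal.ofReal (1 / N) := fun i => by
      rw [Real.volume_Ioc]
      ring_nf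
    rw [measure_biUnion_finset (fun i _ j _ hij => hI hij) fun i _ => measurableSet_Ioc]
    simp only [hvol, Finset.sum_const, nsmul_eq_mul]
    rw [← ENNReal.ofReal_natCast, ← ENNReal.ofReal_mul (Nat.cast_nonneg _)]
    refine ENNReal.ofReal_le_ofReal ?_
    rw [← div_eq_mul_one_div, le_div_iff₀ hN', mul_comm]
    exact_mod_cast hcard v

variable [Fintype V] [DecidableEq V] [DecidableRel G.Adj]

variable (G) in
def SimpleGraph.indepSetsContaining (v : V) : Finset (Finset V) :=
  {S | v ∈ S ∧ G.IsIndepSet S}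

theorem SimpleGraph.mem_indepSetsContaining {v : V} {S : Finset V} :
    S ∈ G.indepSetsContaining v ↔ v ∈ S ∧ G.IsIndepSet S := by
  simp [SimpleGraph.indepSetsContaining]

theorem IsFracColoring.exists_isFracCover {φ : V → Set ℝ} (hφ : IsFracColoring G f φ) :
    ∃ w : Finset V → ℝ, IsFracCover G.indepSetsContaining f w := by
  classical
  obtain ⟨hIcc, hmeas, hdisj, hvol⟩ := hφ
  let μ := volume.restrict (Set.Icc (0 : ℝ) 1)
  let colorsAt : ℝ → Finset V := fun x => {u | x ∈ φ u}
  have hfiber : ∀ S, MeasurableSet (colorsAt ⁻¹' {S}) := fun S => by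
    have : colorsAt ⁻¹' {S} = ⋂ u, if u ∈ S then φ u else (φ u)ᶜ := by
      ext x
      simp only [Set.mem_preimage, Set.mem_singleton_iff, Finset.ext_iff, Set.mem_iInter]
      refine forall_congr' fun u => ?_
      split_ifs with hu <;> simp [colorsAt, hu]
    rw [this]
    refine MeasurableSet.iInter fun u => ?_
    split_ifs
    exacts [hmeas u, (hmeas u).compl]
  have hcolors : ∀ v, φ v = colorsAt ⁻¹' ↑(G.indepSetsContaining v) := fun v => by
    ext x
    simp only [Set.mem_preimage, Finset.mem_coe, SimpleGraph.mem_indepSetsContaining]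
    refine ⟨fun hx => ⟨by simpa [colorsAt] using hx, fun u hu w hw _ huw => ?_⟩, fun h => ?_⟩
    · simp only [Finset.coe_filter, Finset.mem_univ, true_and, colorsAt] at hu hw
      exact (hdisj u w huw).subset ⟨hu, hw⟩
    · simpa [colorsAt] using h.1
  have hsum : ∀ s : Finset (Finset V), ∑ S ∈ s, (μ (colorsAt ⁻¹' {S})).toReal =
      (μ (colorsAt ⁻¹' s)).toReal := fun s => by
    rw [← ENNReal.toReal_sum fun S _ => measure_ne_top μ _,
      sum_measure_preimage_singleton s fun S _ => hfiber S]
  refine ⟨fun S => (μ (colorsAt ⁻¹' {S})).toReal, fun S => ENNReal.toReal_nonneg, ?_, fun v => ?_⟩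
  · rw [hsum, Finset.coe_univ, Set.preimage_univ, Measure.restrict_apply_univ, Real.volume_Icc]
    simp
  · rw [hsum, ← hcolors, ← ENNReal.ofReal_le_iff_le_toReal (measure_ne_top μ _),
      Measure.restrict_eq_self _ (hIcc v)]
    exact hvol v

theorem exists_isFNColoring_of_isFracCover {q : Finset V → ℚ}
    (hq : IsFracCover G.indepSetsContaining f q) :
    ∃ N, IsCommonDenom N f ∧ ∃ ψ, IsFNColoring G f N ψ := by
  obtain ⟨hq0, hq1, hcov⟩ := hq
  obtain ⟨N, hN1, hN⟩ := exists_isCommonDenom (Sum.elim f q)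
  have hm : ∀ S, ∃ m : ℕ, (m : ℚ) = N * q S := fun S => by
    obtain ⟨z, hz : (N : ℚ) * q S = z⟩ := hN (.inr S)
    have hz0 : 0 ≤ z := by
      have := mul_nonneg (Nat.cast_nonneg N) (hq0 S)
      exact_mod_cast hz ▸ this
    exact ⟨z.toNat, by rw [hz]; exact_mod_cast Int.toNat_of_nonneg hz0⟩
  choose m hm using hm
  have hmN : ∑ S, m S ≤ (Finset.Icc 1 N).card := by
    have : ((∑ S, m S : ℕ) : ℚ) ≤ N := by
      push_cast [hm]
      rw [← Finset.mul_sum]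
      exact mul_le_of_le_one_right (Nat.cast_nonneg N) hq1
    rw [Nat.card_Icc, Nat.add_sub_cancel]
    exact_mod_cast this
  obtain ⟨B, hBsub, hBdisj, hBcard⟩ :=
    (Finset.Icc 1 N).exists_pairwise_disjoint_subsets_card_eq m hmN
  refine ⟨N, ⟨hN1, fun v => hN (.inl v)⟩, fun v => (G.indepSetsContaining v).biUnion B,
    fun v => Finset.biUnion_subset.2 fun S _ => hBsub S, fun u v huv => ?_, fun v => ?_⟩
  · simp only [Finset.disjoint_biUnion_left, Finset.disjoint_biUnion_right]
    rintro S hS T hT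
    refine hBdisj fun hTS => ?_
    rw [SimpleGraph.mem_indepSetsContaining] at hS hT
    exact hS.2 (hTS ▸ hT.1) hS.1 huv.ne huv
  · rw [Finset.card_biUnion fun S _ T _ h => hBdisj h]
    push_cast [hBcard, hm]
    rw [← Finset.mul_sum]
    exact mul_le_mul_of_nonneg_left (by simpa using hcov v) (Nat.cast_nonneg N)

end Coloring

theorem stmt1_general {V : Type*} [Fintype V] (G : SimpleGraph V) (f : V → ℚ) :
    (∃ φ, IsFracColoring G f φ) ↔
      (∃ N : ℕ, IsCommonDenom N f ∧ ∃ ψ, IsFNColoring G f N ψ) := by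
  classical
  constructor
  · rintro ⟨φ, hφ⟩
    obtain ⟨w, hw⟩ := hφ.exists_isFracCover
    obtain ⟨q, hq⟩ := hw.exists_rat
    exact exists_isFNColoring_of_isFracCover hq
  · rintro ⟨N, hN, ψ, hψ⟩
    exact hψ.exists_isFracColoring hN.1

/-- `G` has an `f`-coloring iff there is a common denominator `N` of `f` such that
`G` has an `(f,N)`-coloring. -/
theorem stmt1 {V : Type*} [Fintype V] (G : SimpleGraph V) (f : V → ℚ)
    (hf : ∀ v, 0 ≤ f v ∧ f v ≤ 1) :
    (∃ φ, IsFracColoring G f φ) ↔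
      (∃ N : ℕ, IsCommonDenom N f ∧ ∃ ψ, IsFNColoring G f N ψ) :=
  stmt1_general G f
end

section
/- A finite simple graph G has an f-coloring if and only if for every weight function w : V(G) → ℝ>0 there exists an independent set X ⊆ V(G) with w(X) ≥ w(f). -/
/-!
Forward direction: for a colouring `φ` and weights `w ≥ 0`, the function
`x ↦ ∑ v, w v * 1_{φ v}(x)` has mean `∑ v, w v * volume (φ v) ≥ w(f)` over `[0,1]`, so at some
point `x` it is at least `w(f)`; the vertices whose colour set contains `x` are independent.

Backward direction: by perturbing nonnegative weights to positive ones (only finitely many strict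
inequalities need to survive) the hypothesis holds for all `w ≥ 0`. Separating `f` from the closed
convex set `conv {1_S : S independent} - ℝ^V_{≥0}` by Hahn–Banach then puts `f` below a convex
combination `∑ λ_i 1_{S_i}`, which becomes a colouring by cutting `[0,1]` into consecutive
intervals of lengths `λ_i` and giving interval `i` to every vertex of `S_i`.
-/

open MeasureTheory

open Set Topology Function Matrix
open scoped Pointwise

section Forward

variable {V : Type*} {G : SimpleGraph V} {f : V → ℚ} {φ : V → Set ℝ}

open scoped Classical in
lemma IsFracColoring.exists_le_sum_filter_mem [Fintype V] (hφ : IsFracColoring G f φ)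
    {w : V → ℝ} (hw : 0 ≤ w) : ∃ x : ℝ, ∑ v, (f v : ℝ) * w v ≤ ∑ v with x ∈ φ v, w v := by
  obtain ⟨hsub, hmeas, -, hvol⟩ := hφ
  let μ : Measure ℝ := volume.restrict (Icc 0 1)
  have : IsProbabilityMeasure μ := ⟨by simp [μ]⟩
  have hint : ∀ v, Integrable (fun x => w v * (φ v).indicator 1 x) μ := fun v =>
    ((integrable_const (1 : ℝ)).indicator (hmeas v)).const_mul (w v)
  have hf_le : ∀ v, (f v : ℝ) ≤ μ.real (φ v) := fun v => by
    rw [measureReal_restrict_apply (hmeas v), inter_eq_self_of_subset_left (hsub v)]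
    exact (ENNReal.ofReal_le_iff_le_toReal
      ((measure_mono (hsub v)).trans_lt (by simp)).ne).1 (hvol v)
  obtain ⟨x, hx⟩ := exists_integral_le (integrable_finsetSum _ fun v _ => hint v)
  refine ⟨x, ?_⟩
  calc ∑ v, (f v : ℝ) * w v ≤ ∑ v, w v * μ.real (φ v) :=
        Finset.sum_le_sum fun v _ => by
          rw [mul_comm]
          exact mul_le_mul_of_nonneg_left (hf_le v) (hw v)
    _ = ∫ y, ∑ v, w v * (φ v).indicator 1 y ∂μ := by
        rw [integral_finsetSum _ fun v _ => hint v]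
        simp_rw [integral_const_mul, integral_indicator_one (hmeas _)]
    _ ≤ ∑ v, w v * (φ v).indicator 1 x := hx
    _ = ∑ v with x ∈ φ v, w v := by simp [Set.indicator_apply, Finset.sum_filter]

lemma IsFracColoring.not_adj_of_mem (hφ : IsFracColoring G f φ) {x : ℝ} {u v : V}
    (hu : x ∈ φ u) (hv : x ∈ φ v) : ¬ G.Adj u v := fun huv =>
  (hφ.2.2.1 u v huv).subset ⟨hu, hv⟩

end Forward

lemma exists_pairwise_disjoint_subsets_Icc_volume_eq {ι : Type*} [Fintype ι] (l : ι → ℝ)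
    (hl : 0 ≤ l) (hsum : ∑ i, l i ≤ 1) :
    ∃ I : ι → Set ℝ, (∀ i, I i ⊆ Icc 0 1) ∧ (∀ i, MeasurableSet (I i)) ∧
      Pairwise (Disjoint on I) ∧ ∀ i, volume (I i) = ENNReal.ofReal (l i) := by
  classical
  let : LinearOrder ι := LinearOrder.lift' _ (Fintype.equivFin ι).injective
  let s : ι → ℝ := fun i => ∑ j with j < i, l j
  have hs : ∀ i, s i + l i = ∑ j with j ≤ i, l j := fun i => by
    have : Finset.univ.filter (· ≤ i) = insert i (Finset.univ.filter (· < i)) := by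
      ext j; simp [le_iff_lt_or_eq, or_comm]
    rw [this, Finset.sum_insert (by simp), add_comm]
  have hmono : ∀ {t t' : Finset ι}, t ⊆ t' → ∑ j ∈ t, l j ≤ ∑ j ∈ t', l j := fun h =>
    Finset.sum_le_sum_of_subset_of_nonneg h fun j _ _ => hl j
  refine ⟨fun i => Ico (s i) (s i + l i), fun i => ?_, fun i => measurableSet_Ico,
    (pairwise_disjoint_on _).2 fun i j hij => ?_, fun i => by simp⟩
  · refine Ico_subset_Icc_self.trans (Icc_subset_Icc (Finset.sum_nonneg fun j _ => hl j) ?_)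
    exact (hs i).trans_le ((hmono (Finset.subset_univ _)).trans hsum)
  · have hij' : s i + l i ≤ s j := (hs i).trans_le <| hmono fun k hk => by
      simp only [Finset.mem_filter, Finset.mem_univ, true_and] at hk ⊢
      exact hk.trans_lt hij
    exact Set.disjoint_left.2 fun x hx hx' => (hx.2.trans_le hij').not_ge hx'.1

def SimpleGraph.indepSetIndicators {V : Type*} (G : SimpleGraph V) : Set (V → ℝ) :=
  (fun s : Set V => s.indicator 1) '' {s | G.IsIndepSet s}

lemma exists_isFracColoring_of_le_mem_convexHull {V : Type*} {G : SimpleGraph V} {f : V → ℚ}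
    {d : V → ℝ} (hd : d ∈ convexHull ℝ G.indepSetIndicators) (hfd : ∀ v, (f v : ℝ) ≤ d v) :
    ∃ φ, IsFracColoring G f φ := by
  classical
  obtain ⟨ι, _, l, z, hl0, hl1, hz, rfl⟩ := mem_convexHull_iff_exists_fintype.1 hd
  choose s hs hsz using hz
  obtain ⟨I, hIsub, hImeas, hIdisj, hIvol⟩ :=
    exists_pairwise_disjoint_subsets_Icc_volume_eq l hl0 hl1.le
  refine ⟨fun v => ⋃ i ∈ Finset.univ.filter (v ∈ s ·), I i,
    fun v => iUnion₂_subset fun i _ => hIsub i,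
    fun v => Finset.measurableSet_biUnion _ fun i _ => hImeas i,
    fun u v huv => disjoint_iff_inter_eq_empty.1 ?_, fun v => ?_⟩
  · simp only [disjoint_iUnion₂_left, disjoint_iUnion₂_right, Finset.mem_filter,
      Finset.mem_univ, true_and]
    intro i hvi j huj
    refine hIdisj fun hji => ?_
    rw [hji] at huj
    exact hs i huj hvi (G.ne_of_adj huv) huv
  · rw [measure_biUnion_finset (hIdisj.set_pairwise _) fun i _ => hImeas i]
    simp_rw [hIvol]
    rw [← ENNReal.ofReal_sum_of_nonneg fun i _ => hl0 i]
    refine ENNReal.ofReal_le_ofReal ((hfd v).trans_eq ?_)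
    simp [Finset.sum_apply, ← hsz, Set.indicator_apply, Finset.sum_filter]

section Duality

variable {ι : Type*} [Fintype ι] {A : Set (ι → ℝ)} {p : ι → ℝ}

lemma Set.Finite.exists_dotProduct_le_of_forall_pos (hA : A.Finite)
    (h : ∀ w : ι → ℝ, (∀ i, 0 < w i) → ∃ a ∈ A, p ⬝ᵥ w ≤ a ⬝ᵥ w) {w : ι → ℝ} (hw : 0 ≤ w) :
    ∃ a ∈ A, p ⬝ᵥ w ≤ a ⬝ᵥ w := by
  by_contra! hlt
  have hcont : ∀ q : ι → ℝ, Continuous fun ε : ℝ => q ⬝ᵥ (w + fun _ => ε) := fun q => by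
    simp only [dotProduct]
    fun_prop
  -- finitely many strict inequalities survive replacing `w` by `w + ε` for small `ε > 0`
  have hev : ∀ᶠ ε in 𝓝[>] (0 : ℝ), ∀ a ∈ A, a ⬝ᵥ (w + fun _ => ε) < p ⬝ᵥ (w + fun _ => ε) :=
    hA.eventually_all.2 fun a ha => nhdsWithin_le_nhds <|
      (hcont a).continuousAt.eventually_lt (hcont p).continuousAt (by simpa using hlt a ha)
  obtain ⟨ε, hε, hεpos⟩ := (hev.and self_mem_nhdsWithin).exists
  obtain ⟨a, ha, hle⟩ := h (w + fun _ => ε) fun i => add_pos_of_nonneg_of_pos (hw i) hεpos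
  exact (hε a ha).not_ge hle

lemma Set.Finite.exists_mem_convexHull_le (hA : A.Finite)
    (h : ∀ w : ι → ℝ, 0 ≤ w → ∃ a ∈ A, p ⬝ᵥ w ≤ a ⬝ᵥ w) : ∃ d ∈ convexHull ℝ A, p ≤ d := by
  classical
  suffices p ∈ convexHull ℝ A + Iic (0 : ι → ℝ) by
    obtain ⟨d, hd, c, hc, rfl⟩ := this
    exact ⟨d, hd, add_le_of_nonpos_right hc⟩
  by_contra hp
  obtain ⟨L, u, hLK, hLp⟩ := geometric_hahn_banach_closed_point
    ((convex_convexHull ℝ A).add (convex_Iic 0))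
    (isClosed_Iic.add_left_of_isCompact (hA.isCompact_convexHull ℝ)) hp
  let e : ι → ι → ℝ := fun i j => if i = j then 1 else 0
  let w : ι → ℝ := fun i => L (e i)
  have hL : ∀ x, L x = x ⬝ᵥ w := fun x => L.toLinearMap.pi_apply_eq_sum_univ x
  have hLA : ∀ a ∈ A, ∀ c ≤ 0, L (a + c) < u := fun a ha c hc =>
    hLK _ (add_mem_add (subset_convexHull ℝ A ha) hc)
  obtain ⟨a, ha, -⟩ := h 0 le_rfl
  have hw : 0 ≤ w := fun i => by
    by_contra! hi
    -- otherwise `L` is unbounded above on the ray `a - t • e i`, `t ≥ 0`, inside the separated set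
    have ht : (u - L a) / w i ≤ 0 :=
      div_nonpos_of_nonneg_of_nonpos (by simpa using (hLA a ha 0 le_rfl).le) hi.le
    have := hLA a ha (((u - L a) / w i) • e i) fun j => by
      by_cases hij : i = j
      · subst hij; simpa [e] using ht
      · simp [e, hij]
    rw [map_add, map_smul, smul_eq_mul, div_mul_cancel₀ _ hi.ne] at this
    linarith
  obtain ⟨a, ha, hpa⟩ := h w hw
  have := hLA a ha 0 le_rfl
  rw [add_zero, hL] at this
  rw [hL] at hLp
  linarith

end Duality

theorem stmt2_general {V : Type*} [Fintype V] (G : SimpleGraph V) (f : V → ℚ) :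
    (∃ φ, IsFracColoring G f φ) ↔
      (∀ w : V → ℝ, (∀ v, 0 < w v) →
        ∃ X : Finset V, (∀ u ∈ X, ∀ v ∈ X, ¬ G.Adj u v) ∧
          ∑ v, (f v : ℝ) * w v ≤ ∑ v ∈ X, w v) := by
  constructor
  · rintro ⟨φ, hφ⟩ w hw
    obtain ⟨x, hx⟩ := hφ.exists_le_sum_filter_mem fun v => (hw v).le
    refine ⟨_, fun u hu v hv => hφ.not_adj_of_mem (x := x) ?_ ?_, hx⟩ <;> simp_all
  · intro h
    have hA : G.indepSetIndicators.Finite := (toFinite _).image _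
    have hpos : ∀ w : V → ℝ, (∀ v, 0 < w v) →
        ∃ a ∈ G.indepSetIndicators, (fun v => (f v : ℝ)) ⬝ᵥ w ≤ a ⬝ᵥ w := fun w hw => by
      classical
      obtain ⟨X, hX, hXw⟩ := h w hw
      refine ⟨_, ⟨X, fun u hu v hv _ => hX u hu v hv, rfl⟩, ?_⟩
      simpa [dotProduct, Set.indicator_apply] using hXw
    obtain ⟨d, hd, hfd⟩ := hA.exists_mem_convexHull_le fun w hw =>
      hA.exists_dotProduct_le_of_forall_pos hpos hw
    exact exists_isFracColoring_of_le_mem_convexHull hd hfd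

/-- `G` has an `f`-coloring iff for every positive weight function `w` there is an
independent set `X` with `w(X) ≥ w(f)`. -/
theorem stmt2 {V : Type*} [Fintype V] (G : SimpleGraph V) (f : V → ℚ)
    (hf : ∀ v, 0 ≤ f v ∧ f v ≤ 1) :
    (∃ φ, IsFracColoring G f φ) ↔
      (∀ w : V → ℝ, (∀ v, 0 < w v) →
        ∃ X : Finset V, (∀ u ∈ X, ∀ v ∈ X, ¬ G.Adj u v) ∧
          ∑ v, (f v : ℝ) * w v ≤ ∑ v ∈ X, w v) :=
  stmt2_general G f
end

section
/- Let G be a finite simple graph and v a vertex of G such that G admits a proper 3-coloring in which all neighbors of v receive the same color. Then for every weight function w : V(G) → ℝ>0, G contains an independent set X with w(X) ≥ (w(V(G)) + w(v))/3. -/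
open MeasureTheory

/-!
Let `j` be a colour that appears neither at `v` nor on its neighbourhood (with three colours and a
monochromatic neighbourhood there is one). Adding `v` to the colour class of `j` keeps it
independent, so the colour classes, with `v` added to that of `j`, are independent sets covering
every vertex once and `v` twice. Their weights add up to `w(V) + w(v)`, so one of the three weighs
at least a third of that.
-/

namespace SimpleGraph

variable {V α : Type*} {G : SimpleGraph V}

lemma Coloring.isIndepSet_insert_colorClass (c : G.Coloring α) {v : V} {j : α}
    (hj : ∀ u, G.Adj v u → c u ≠ j) : G.IsIndepSet (insert v (c.colorClass j)) :=
  (isIndepSet_iff G).2 <| ((isIndepSet_iff G).1 (c.isIndepSet_colorClass j)).insert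
    fun u hu _ => ⟨fun h => hj u h hu, fun h => hj u h.symm hu⟩

lemma Coloring.exists_free_color_of_neighbors_monochromatic [Fintype α]
    (hα : 2 < Fintype.card α) (c : G.Coloring α) {v : V}
    (hc : ∀ u u', G.Adj v u → G.Adj v u' → c u = c u') :
    ∃ j, c v ≠ j ∧ ∀ u, G.Adj v u → c u ≠ j := by
  classical
  obtain ⟨k, hk⟩ : ∃ k, ∀ u, G.Adj v u → c u = k := by
    by_cases hv : ∃ u, G.Adj v u
    · obtain ⟨u, hu⟩ := hv
      exact ⟨c u, fun u' hu' => hc u' u hu' hu⟩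
    · simp only [not_exists] at hv
      exact ⟨c v, fun u hu => absurd hu (hv u)⟩
  obtain ⟨j, -, hj⟩ := Finset.exists_mem_notMem_of_card_lt_card
    ((Finset.card_le_two (a := c v) (b := k)).trans_lt (hα.trans_eq Finset.card_univ.symm))
  simp only [Finset.mem_insert, Finset.mem_singleton, not_or] at hj
  exact ⟨j, Ne.symm hj.1, fun u hu => hk u hu ▸ Ne.symm hj.2⟩

theorem Coloring.exists_isIndepSet_sum_ge_of_free_color [Fintype V] [Fintype α]
    (c : G.Coloring α) {v : V} {j : α} (hvj : c v ≠ j)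
    (hj : ∀ u, G.Adj v u → c u ≠ j) (w : V → ℝ) :
    ∃ X : Finset V, G.IsIndepSet (X : Set V) ∧
      (∑ u, w u + w v) / Fintype.card α ≤ ∑ u ∈ X, w u := by
  classical
  let A (i : α) : Finset V := {u | c u = i}
  let S (i : α) : Finset V := if i = j then insert v (A i) else A i
  have hA (i : α) : (A i : Set V) = c.colorClass i := by
    ext
    simp [A, Coloring.colorClass]
  have hS_indep (i : α) : G.IsIndepSet (S i : Set V) := by
    by_cases hi : i = j
    · subst hi
      simpa [S, hA] using c.isIndepSet_insert_colorClass hj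
    · simpa [S, hi, hA] using c.isIndepSet_colorClass i
  have hS_sum : ∑ i, ∑ u ∈ S i, w u = ∑ u, w u + w v := by
    have hS_weight (i : α) : ∑ u ∈ S i, w u = ∑ u ∈ A i, w u + if i = j then w v else 0 := by
      split_ifs with hi
      · subst hi
        simp [S, A, Finset.sum_insert, hvj, add_comm]
      · simp [S, hi]
    simp only [hS_weight, Finset.sum_add_distrib, Finset.sum_ite_eq', Finset.mem_univ, if_true]
    exact congrArg (· + w v) (Finset.sum_fiberwise _ _ _)
  have hα : (0 : ℝ) < Fintype.card α := Nat.cast_pos.2 (Fintype.card_pos_iff.2 ⟨c v⟩)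
  have hS_avg : ∑ _i : α, (∑ u, w u + w v) / Fintype.card α ≤ ∑ i, ∑ u ∈ S i, w u := by
    rw [hS_sum, Finset.sum_const, Finset.card_univ, nsmul_eq_mul, mul_div_cancel₀ _ hα.ne']
  obtain ⟨i, -, hi⟩ := Finset.exists_le_of_sum_le ⟨c v, Finset.mem_univ _⟩ hS_avg
  exact ⟨S i, hS_indep i, hi⟩

end SimpleGraph

/-- If `G` has a proper 3-coloring in which all neighbors of `v` receive the same color,
then for every positive weight function `w` there is an independent set `X` with
`w(X) ≥ (w(V(G)) + w(v)) / 3`. -/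
theorem stmt4 {V : Type*} [Fintype V] (G : SimpleGraph V) (v : V)
    (h : ∃ c : G.Coloring (Fin 3), ∀ u u', G.Adj v u → G.Adj v u' → c u = c u') :
    ∀ w : V → ℝ, (∀ u, 0 < w u) →
      ∃ X : Finset V, (∀ a ∈ X, ∀ b ∈ X, ¬ G.Adj a b) ∧
        (∑ u, w u + w v) / 3 ≤ ∑ u ∈ X, w u := by
  intro w _
  obtain ⟨c, hc⟩ := h
  obtain ⟨j, hvj, hj⟩ := c.exists_free_color_of_neighbors_monochromatic (by simp) hc
  obtain ⟨X, hX, hwX⟩ := c.exists_isIndepSet_sum_ge_of_free_color hvj hj w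
  refine ⟨X, fun a ha b hb hab => hX ha hb hab.ne hab, ?_⟩
  simpa using hwX
end

section
/- Let G be a finite simple graph on n ≥ 1 vertices. Suppose that for every vertex v of G, the graph G has an f_v-coloring, where f_v(v) = 2/3 and f_v(u) = 1/3 for every vertex u ≠ v. Then G has a c_{(n+1)/(3n)}-coloring; in particular, the fractional chromatic number of G is at most 3n/(n+1). -/
open MeasureTheory

/-- The fractional chromatic number of `G`:
`1 / sup { x ∈ ℚ ∩ [0,1] : G has a c_x-coloring }`. -/
noncomputable def fracChromaticNumber {V : Type*} (G : SimpleGraph V) : ℝ :=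
  1 / sSup {y : ℝ | ∃ x : ℚ, 0 ≤ x ∧ x ≤ 1 ∧ y = (x : ℝ) ∧
    ∃ φ, IsFracColoring G (fun _ => x) φ}

lemma stmt5_vol_pre (n : ℕ) (hn : 0 < n) (c : ℝ) (s : Set ℝ) :
    volume ((fun y => (n:ℝ)*y - c) ⁻¹' s) = ENNReal.ofReal ((n:ℝ)⁻¹) * volume s := by
  have hne : (n:ℝ) ≠ 0 := by positivity
  have h1 : (fun y => (n:ℝ)*y - c) = (fun z => z + (-c)) ∘ (fun y : ℝ => (n:ℝ)*y) := by
    funext y; simp [sub_eq_add_neg]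
  rw [h1, Set.preimage_comp, Real.volume_preimage_mul_left hne]
  congr 1
  · congr 1
    rw [abs_of_nonneg (by positivity)]
  · exact measure_preimage_add_right volume (-c) s

/-- If for every vertex `v` of an `n`-vertex graph `G` there is an `f_v`-coloring
(`f_v(v) = 2/3`, `f_v(u) = 1/3` otherwise), then `G` has a `c_{(n+1)/(3n)}`-coloring,
and hence the fractional chromatic number of `G` is at most `3n/(n+1)`. -/
theorem stmt5 {V : Type*} [Fintype V] [DecidableEq V] (G : SimpleGraph V) (n : ℕ)
    (hn : n = Fintype.card V) (hn1 : 1 ≤ n)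
    (h : ∀ v : V, ∃ φ, IsFracColoring G (fun u => if u = v then 2/3 else 1/3) φ) :
    (∃ φ, IsFracColoring G (fun _ => ((n : ℚ) + 1) / (3 * n)) φ) ∧
      fracChromaticNumber G ≤ (3 * n : ℝ) / (n + 1) := by
  classical
  have hnpos : 0 < n := hn1
  have hn0 : (0:ℝ) < (n:ℝ) := by exact_mod_cast hnpos
  have hnne : (n:ℝ) ≠ 0 := ne_of_gt hn0
  set x0 : ℚ := ((n : ℚ) + 1) / (3 * n) with hx0def
  have hx0real : (x0 : ℝ) = ((n:ℝ) + 1) / (3 * (n:ℝ)) := by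
    rw [hx0def]; push_cast; ring
  have hx0pos : (0:ℝ) < (x0:ℝ) := by rw [hx0real]; positivity
  let e : V ≃ Fin n := Fintype.equivFinOfCardEq hn.symm
  choose Φ hΦ using h
  have main : ∃ φ, IsFracColoring G (fun _ => x0) φ := by
    set Φ' : V → V → Set ℝ := fun v u => Φ v u ∩ Set.Ico 0 1 with hΦ'def
    have hΦ'meas : ∀ v u, MeasurableSet (Φ' v u) := fun v u =>
      ((hΦ v).2.1 u).inter measurableSet_Ico
    have hΦ'vol : ∀ v u,
        ENNReal.ofReal (((if u = v then (2:ℚ)/3 else 1/3) : ℚ) : ℝ) ≤ volume (Φ' v u) := by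
      intro v u
      refine le_trans ((hΦ v).2.2.2 u) ?_
      have hsub : Φ v u ⊆ Φ' v u ∪ {1} := by
        intro x hx
        rcases (hΦ v).1 u hx with ⟨h0, h1⟩
        rcases lt_or_eq_of_le h1 with hlt | heq
        · exact Or.inl ⟨hx, h0, hlt⟩
        · exact Or.inr heq
      calc volume (Φ v u) ≤ volume (Φ' v u ∪ {1}) := measure_mono hsub
        _ ≤ volume (Φ' v u) + volume ({1} : Set ℝ) := measure_union_le _ _
        _ = volume (Φ' v u) := by simp
    set ψ : V → Set ℝ :=
      fun u => ⋃ i : Fin n, (fun y => (n:ℝ)*y - ((i:ℕ):ℝ)) ⁻¹' (Φ' (e.symm i) u) with hψdef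
    have key : ∀ (i j : Fin n) (u w : V) (y : ℝ),
        y ∈ (fun y => (n:ℝ)*y - ((i:ℕ):ℝ)) ⁻¹' (Φ' (e.symm i) u) →
        y ∈ (fun y => (n:ℝ)*y - ((j:ℕ):ℝ)) ⁻¹' (Φ' (e.symm j) w) → i = j := by
      intro i j u w y hi hj
      have h1 : (n:ℝ)*y - ((i:ℕ):ℝ) ∈ Set.Ico (0:ℝ) 1 := hi.2
      have h2 : (n:ℝ)*y - ((j:ℕ):ℝ) ∈ Set.Ico (0:ℝ) 1 := hj.2
      have b1 : ((i:ℕ):ℝ) < ((j:ℕ):ℝ) + 1 := by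
        have := h1.1; have := h2.2; linarith
      have b2 : ((j:ℕ):ℝ) < ((i:ℕ):ℝ) + 1 := by
        have := h2.1; have := h1.2; linarith
      have a1 : (i:ℕ) < (j:ℕ) + 1 := by exact_mod_cast b1
      have a2 : (j:ℕ) < (i:ℕ) + 1 := by exact_mod_cast b2
      exact Fin.ext (by omega)
    refine ⟨ψ, ?_, ?_, ?_, ?_⟩
    · intro u y hy
      simp only [hψdef, Set.mem_iUnion] at hy
      obtain ⟨i, hi⟩ := hy
      have h1 : (n:ℝ)*y - ((i:ℕ):ℝ) ∈ Set.Ico (0:ℝ) 1 := hi.2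
      have hile : ((i:ℕ):ℝ) + 1 ≤ (n:ℝ) := by exact_mod_cast i.2
      have hinn : (0:ℝ) ≤ ((i:ℕ):ℝ) := Nat.cast_nonneg _
      constructor
      · nlinarith [h1.1]
      · nlinarith [h1.2]
    · intro u
      exact MeasurableSet.iUnion fun i =>
        (hΦ'meas _ _).preimage (by fun_prop)
    · intro u w hadj
      ext y
      simp only [hψdef, Set.mem_inter_iff, Set.mem_iUnion, Set.mem_empty_iff_false, iff_false]
      rintro ⟨⟨i, hi⟩, ⟨j, hj⟩⟩
      have hij := key i j u w y hi hj
      subst hij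
      have hmem : (n:ℝ)*y - ((i:ℕ):ℝ) ∈ Φ (e.symm i) u ∩ Φ (e.symm i) w :=
        ⟨hi.1, hj.1⟩
      rw [(hΦ (e.symm i)).2.2.1 u w hadj] at hmem
      exact hmem
    · intro u
      have hdisj : Pairwise (Function.onFun Disjoint
          (fun i : Fin n => (fun y => (n:ℝ)*y - ((i:ℕ):ℝ)) ⁻¹' (Φ' (e.symm i) u))) := by
        intro i j hij
        rw [Function.onFun, Set.disjoint_left]
        intro y hy1 hy2
        exact hij (key i j u u y hy1 hy2)
      have hmeas : ∀ i : Fin n,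
          MeasurableSet ((fun y => (n:ℝ)*y - ((i:ℕ):ℝ)) ⁻¹' (Φ' (e.symm i) u)) :=
        fun i => (hΦ'meas _ _).preimage (by fun_prop)
      have hvol : volume (ψ u) = ∑ i : Fin n,
          ENNReal.ofReal ((n:ℝ)⁻¹) * volume (Φ' (e.symm i) u) := by
        rw [hψdef]
        rw [measure_iUnion hdisj hmeas, tsum_fintype]
        congr 1
        funext i
        exact stmt5_vol_pre n hnpos _ _
      rw [hvol]
      have hterm : ∀ i : Fin n,
          ENNReal.ofReal ((n:ℝ)⁻¹ * (((if u = e.symm i then (2:ℚ)/3 else 1/3) : ℚ) : ℝ))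
            ≤ ENNReal.ofReal ((n:ℝ)⁻¹) * volume (Φ' (e.symm i) u) := by
        intro i
        rw [ENNReal.ofReal_mul (by positivity)]
        exact mul_le_mul_right (hΦ'vol _ _) _
      have hsum : (∑ i : Fin n,
          ((n:ℝ)⁻¹ * (((if u = e.symm i then (2:ℚ)/3 else 1/3) : ℚ) : ℝ))) = (x0:ℝ) := by
        have hcast : ∀ i : Fin n,
            (((if u = e.symm i then (2:ℚ)/3 else 1/3) : ℚ) : ℝ)
              = (if u = e.symm i then (1:ℝ)/3 else 0) + 1/3 := by
          intro i; split <;> norm_num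
        simp only [hcast]
        rw [Finset.sum_congr rfl (fun i _ => rfl)]
        have : (∑ i : Fin n, ((n:ℝ)⁻¹ * ((if u = e.symm i then (1:ℝ)/3 else 0) + 1/3)))
            = (n:ℝ)⁻¹ * ∑ i : Fin n, ((if u = e.symm i then (1:ℝ)/3 else 0) + 1/3) := by
          rw [Finset.mul_sum]
        rw [this, Finset.sum_add_distrib]
        have h1 : (∑ i : Fin n, (if u = e.symm i then (1:ℝ)/3 else 0)) = 1/3 := by
          rw [Equiv.sum_comp e.symm (fun v => if u = v then (1:ℝ)/3 else 0)]
          simp [Finset.sum_ite_eq]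
        have h2 : (∑ _i : Fin n, ((1:ℝ)/3)) = (n:ℝ)/3 := by
          rw [Finset.sum_const]
          simp [Finset.card_univ]
          ring
        rw [h1, h2, hx0real]
        field_simp
        ring
      calc ENNReal.ofReal ((x0:ℝ))
          = ENNReal.ofReal (∑ i : Fin n,
              ((n:ℝ)⁻¹ * (((if u = e.symm i then (2:ℚ)/3 else 1/3) : ℚ) : ℝ))) := by rw [hsum]
        _ = ∑ i : Fin n, ENNReal.ofReal
              ((n:ℝ)⁻¹ * (((if u = e.symm i then (2:ℚ)/3 else 1/3) : ℚ) : ℝ)) := by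
            rw [ENNReal.ofReal_sum_of_nonneg]
            intro i _
            have : (0:ℝ) ≤ (((if u = e.symm i then (2:ℚ)/3 else 1/3) : ℚ) : ℝ) := by
              split <;> norm_num
            positivity
        _ ≤ ∑ i : Fin n, ENNReal.ofReal ((n:ℝ)⁻¹) * volume (Φ' (e.symm i) u) :=
            Finset.sum_le_sum fun i _ => hterm i
  obtain ⟨φ, hφ⟩ := main
  refine ⟨⟨φ, hφ⟩, ?_⟩
  -- second part
  have hx0nonneg : (0:ℚ) ≤ x0 := by
    rw [hx0def]; positivity
  have hx0le1 : x0 ≤ 1 := by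
    rw [hx0def, div_le_one (by positivity)]
    have : (1:ℚ) ≤ (n:ℚ) := by exact_mod_cast hn1
    linarith
  set S := {y : ℝ | ∃ x : ℚ, 0 ≤ x ∧ x ≤ 1 ∧ y = (x : ℝ) ∧
    ∃ φ, IsFracColoring G (fun _ => x) φ} with hSdef
  have hmem : (x0:ℝ) ∈ S := ⟨x0, hx0nonneg, hx0le1, rfl, φ, hφ⟩
  have hbdd : BddAbove S := by
    refine ⟨1, fun y hy => ?_⟩
    obtain ⟨x, _, hx1, rfl, _⟩ := hy
    exact_mod_cast hx1
  have hle : (x0:ℝ) ≤ sSup S := le_csSup hbdd hmem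
  have h1 : fracChromaticNumber G = 1 / sSup S := rfl
  rw [h1]
  have h2 : 1 / sSup S ≤ 1 / (x0:ℝ) := one_div_le_one_div_of_le hx0pos hle
  refine h2.trans ?_
  rw [hx0real, one_div_div]
end

section
/- Let G be a finite simple graph, k ≥ 1 an integer, and let V(G) = C_1 ∪ … ∪ C_k be a partition of the vertex set such that for every i ∈ {1,…,k}, the graph G has an f_i-coloring, where f_i(v) = 2/3 for v ∈ C_i and f_i(v) = 1/3 for v ∉ C_i. Then G has a c_{(k+1)/(3k)}-coloring; in particular, the fractional chromatic number of G is at most 3k/(k+1). -/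
open MeasureTheory

/-!
Put the `i`-th coloring, cut down to `[0,1)`, on the slot `[i, i+1)` and shrink `[0,k)` back onto
`[0,1)` by the factor `k`. Every point of `[0,k)` lies in exactly one slot, so adjacent vertices
still get disjoint sets, and `v` receives measure at least
`(∑ᵢ fᵢ(v)) / k = ((k-1)/3 + 2/3) / k = (k+1)/(3k)`.
-/

open Set

lemma eq_of_sub_natCast_mem_Ico {m n : ℕ} {x : ℝ} (hm : x - m ∈ Ico (0 : ℝ) 1)
    (hn : x - n ∈ Ico (0 : ℝ) 1) : m = n := by
  have floor_eq : ∀ j : ℕ, x - j ∈ Ico (0 : ℝ) 1 → ⌊x⌋ = j := fun j ⟨h0, h1⟩ ↦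
    Int.floor_eq_iff.2 ⟨by push_cast; linarith, by push_cast; linarith⟩
  exact_mod_cast (floor_eq m hm).symm.trans (floor_eq n hn)

lemma volume_inter_Ico_of_subset_Icc {s : Set ℝ} {a b : ℝ} (hs : s ⊆ Icc a b) :
    volume (s ∩ Ico a b) = volume s := by
  refine le_antisymm (measure_mono inter_subset_left) ?_
  calc volume s = volume (s \ {b}) := (measure_sdiff_null (measure_singleton b)).symm
    _ ≤ volume (s ∩ Ico a b) := measure_mono fun x ⟨hxs, hxb⟩ ↦
        ⟨hxs, (hs hxs).1, (hs hxs).2.lt_of_ne hxb⟩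

section Stacking

variable {V : Type*} {G : SimpleGraph V} {k : ℕ}

def stackColoring (k : ℕ) (φ : Fin k → V → Set ℝ) (v : V) : Set ℝ :=
  (fun x ↦ (k : ℝ) * x) ⁻¹' ⋃ i : Fin k, (fun x ↦ x - i) ⁻¹' (φ i v ∩ Ico 0 1)

lemma mem_stackColoring {φ : Fin k → V → Set ℝ} {v : V} {x : ℝ} :
    x ∈ stackColoring k φ v ↔ ∃ i : Fin k, k * x - i ∈ φ i v ∧ k * x - i ∈ Ico (0 : ℝ) 1 := by
  simp only [stackColoring, mem_preimage, mem_iUnion, mem_inter_iff]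

lemma stackColoring_subset_Icc (φ : Fin k → V → Set ℝ) (v : V) :
    stackColoring k φ v ⊆ Icc 0 1 := by
  intro x hx
  obtain ⟨i, -, h0, h1⟩ := mem_stackColoring.1 hx
  have hik : (i : ℝ) + 1 ≤ k := by exact_mod_cast i.isLt
  have hi : (0 : ℝ) ≤ i := i.val.cast_nonneg
  constructor <;> nlinarith

lemma measurableSet_stackColoring {φ : Fin k → V → Set ℝ}
    (hφ : ∀ i v, MeasurableSet (φ i v)) (v : V) : MeasurableSet (stackColoring k φ v) := by
  refine measurableSet_preimage (by fun_prop) (.iUnion fun i ↦ ?_)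
  exact measurableSet_preimage (by fun_prop) ((hφ i v).inter measurableSet_Ico)

lemma stackColoring_inter_eq_empty {φ : Fin k → V → Set ℝ}
    (hφ : ∀ i u v, G.Adj u v → φ i u ∩ φ i v = ∅) {u v : V} (huv : G.Adj u v) :
    stackColoring k φ u ∩ stackColoring k φ v = ∅ := by
  refine eq_empty_of_forall_notMem fun x ⟨hxu, hxv⟩ ↦ ?_
  obtain ⟨i, hxi, hi⟩ := mem_stackColoring.1 hxu
  obtain ⟨j, hxj, hj⟩ := mem_stackColoring.1 hxv
  obtain rfl : i = j := Fin.ext (eq_of_sub_natCast_mem_Ico hi hj)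
  exact (hφ i u v huv).subset ⟨hxi, hxj⟩

lemma volume_stackColoring (hk : k ≠ 0) {φ : Fin k → V → Set ℝ}
    (hφ : ∀ i v, MeasurableSet (φ i v)) (v : V) :
    volume (stackColoring k φ v) =
      ENNReal.ofReal (k : ℝ)⁻¹ * ∑ i, volume (φ i v ∩ Ico 0 1) := by
  have hdisj : Pairwise (Function.onFun Disjoint
      fun i : Fin k ↦ (fun x ↦ x - (i : ℝ)) ⁻¹' (φ i v ∩ Ico 0 1)) :=
    fun i j hij ↦ disjoint_left.2 fun x ⟨_, hi⟩ ⟨_, hj⟩ ↦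
      hij (Fin.ext (eq_of_sub_natCast_mem_Ico hi hj))
  have hmeas : ∀ i : Fin k, MeasurableSet ((fun x ↦ x - (i : ℝ)) ⁻¹' (φ i v ∩ Ico 0 1)) := fun i ↦
    measurableSet_preimage (by fun_prop) ((hφ i v).inter measurableSet_Ico)
  have hshift : ∀ (a : ℝ) (s : Set ℝ), volume ((fun x ↦ x - a) ⁻¹' s) = volume s := fun a s ↦ by
    simpa only [sub_eq_add_neg] using measure_preimage_add_right volume (-a) s
  rw [stackColoring, Real.volume_preimage_mul_left (by exact_mod_cast hk),
    abs_of_nonneg (by positivity), measure_iUnion hdisj hmeas, tsum_fintype]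
  simp only [hshift]

theorem IsFracColoring.stackColoring (hk : k ≠ 0) {f : Fin k → V → ℚ} {φ : Fin k → V → Set ℝ}
    (hφ : ∀ i, IsFracColoring G (f i) (φ i)) :
    IsFracColoring G (fun v ↦ (∑ i, f i v) / k) (stackColoring k φ) := by
  have hmeas : ∀ i v, MeasurableSet (φ i v) := fun i ↦ (hφ i).2.1
  refine ⟨stackColoring_subset_Icc φ, measurableSet_stackColoring hmeas,
    fun u v ↦ stackColoring_inter_eq_empty fun i ↦ (hφ i).2.2.1, fun v ↦ ?_⟩
  rw [volume_stackColoring hk hmeas]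
  calc ENNReal.ofReal (((∑ i, f i v) / k : ℚ) : ℝ)
      = ENNReal.ofReal (k : ℝ)⁻¹ * ENNReal.ofReal (∑ i, (f i v : ℝ)) := by
        rw [← ENNReal.ofReal_mul (by positivity)]
        push_cast
        ring_nf
    _ ≤ ENNReal.ofReal (k : ℝ)⁻¹ * ∑ i, ENNReal.ofReal (f i v : ℝ) := by
        gcongr
        exact Finset.le_sum_of_subadditive _ ENNReal.ofReal_zero.le
          (fun _ _ ↦ ENNReal.ofReal_add_le) _ _
    _ ≤ ENNReal.ofReal (k : ℝ)⁻¹ * ∑ i, volume (φ i v ∩ Ico 0 1) := by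
        gcongr with i
        rw [volume_inter_Ico_of_subset_Icc ((hφ i).1 v)]
        exact (hφ i).2.2.2 v

end Stacking

lemma fracChromaticNumber_le_one_div {V : Type*} {G : SimpleGraph V} {x : ℚ} (hx0 : 0 < x)
    (hx1 : x ≤ 1) {φ : V → Set ℝ} (hφ : IsFracColoring G (fun _ ↦ x) φ) :
    fracChromaticNumber G ≤ 1 / (x : ℝ) := by
  have hbdd : BddAbove {y : ℝ | ∃ x : ℚ, 0 ≤ x ∧ x ≤ 1 ∧ y = (x : ℝ) ∧
      ∃ φ, IsFracColoring G (fun _ ↦ x) φ} :=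
    ⟨1, by rintro _ ⟨x, -, hx1, rfl, -⟩; exact_mod_cast hx1⟩
  exact one_div_le_one_div_of_le (by exact_mod_cast hx0)
    (le_csSup hbdd ⟨x, hx0.le, hx1, rfl, φ, hφ⟩)

theorem stmt6_general {V : Type*} (G : SimpleGraph V) (k : ℕ) (hk : 1 ≤ k)
    (P : V → Fin k)
    (h : ∀ i : Fin k, ∃ φ, IsFracColoring G (fun v => if P v = i then 2/3 else 1/3) φ) :
    (∃ φ, IsFracColoring G (fun _ => ((k : ℚ) + 1) / (3 * k)) φ) ∧
      fracChromaticNumber G ≤ (3 * k : ℝ) / (k + 1) := by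
  choose φ hφ using h
  have hk0 : (k : ℚ) ≠ 0 := by positivity
  have hsum : ∀ v, (∑ i, if P v = i then (2 / 3 : ℚ) else 1 / 3) / k = (k + 1) / (3 * k) := by
    intro v
    have hsplit : ∀ i,
        (if P v = i then (2 / 3 : ℚ) else 1 / 3) = 1 / 3 + if P v = i then 1 / 3 else 0 := by
      intro i; split_ifs <;> norm_num
    simp only [hsplit, Finset.sum_add_distrib, Finset.sum_ite_eq, Finset.mem_univ, if_true,
      Finset.sum_const, Finset.card_univ, Fintype.card_fin, nsmul_eq_mul]
    field_simp
  have hcol : IsFracColoring G (fun _ ↦ ((k : ℚ) + 1) / (3 * k)) (stackColoring k φ) := by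
    simpa only [hsum] using IsFracColoring.stackColoring (by omega) hφ
  refine ⟨⟨_, hcol⟩, ?_⟩
  have hk1 : (1 : ℚ) ≤ k := by exact_mod_cast hk
  calc fracChromaticNumber G ≤ 1 / ((((k : ℚ) + 1) / (3 * k) : ℚ) : ℝ) :=
        fracChromaticNumber_le_one_div (by positivity)
          ((div_le_one (by positivity)).2 (by linarith)) hcol
    _ = (3 * k : ℝ) / (k + 1) := by push_cast; rw [one_div_div]

/-- If `V(G) = C_1 ∪ … ∪ C_k` is a partition (given by `P : V → Fin k`) such that for
every class `C_i` the graph `G` has an `f_i`-coloring (`f_i = 2/3` on `C_i`, `1/3` elsewhere),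
then `G` has a `c_{(k+1)/(3k)}`-coloring, and hence the fractional chromatic number of `G`
is at most `3k/(k+1)`. -/
theorem stmt6 {V : Type*} [Fintype V] (G : SimpleGraph V) (k : ℕ) (hk : 1 ≤ k)
    (P : V → Fin k)
    (h : ∀ i : Fin k, ∃ φ, IsFracColoring G (fun v => if P v = i then 2/3 else 1/3) φ) :
    (∃ φ, IsFracColoring G (fun _ => ((k : ℚ) + 1) / (3 * k)) φ) ∧
      fracChromaticNumber G ≤ (3 * k : ℝ) / (k + 1) :=
  stmt6_general G k hk P h
end

section
/- Let G be a finite simple graph and let G_1, G_2 be subgraphs of G such that G = G_1 ∪ G_2 (every vertex and every edge of G lies in G_1 or in G_2) and V(G_1) ∩ V(G_2) = {v} for a single vertex v. Let x ∈ ℚ ∩ [0,1] and let N be a common denominator of the constant function c_x. If both G_1 and G_2 have tight (c_x,N)-colorings, then G has a (c_x,N)-coloring. -/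
open MeasureTheory

/-- If `G = G₁ ∪ G₂` where the subgraphs `G₁` and `G₂` share exactly one vertex `v`,
and both `G₁` and `G₂` have tight `(c_x,N)`-colorings, then `G` has a `(c_x,N)`-coloring. -/
theorem stmt7 {V : Type*} [Fintype V] (G : SimpleGraph V) (G1 G2 : G.Subgraph)
    (hunion : G1 ⊔ G2 = ⊤) (v : V) (hv : G1.verts ∩ G2.verts = {v})
    (x : ℚ) (hx0 : 0 ≤ x) (hx1 : x ≤ 1)
    (N : ℕ) (hN : IsCommonDenom N (fun _ : V => x))
    (h1 : ∃ ψ : G1.verts → Finset ℕ, IsTightFNColoring G1.coe (fun _ => x) N ψ)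
    (h2 : ∃ ψ : G2.verts → Finset ℕ, IsTightFNColoring G2.coe (fun _ => x) N ψ) :
    ∃ ψ : V → Finset ℕ, IsFNColoring G (fun _ => x) N ψ := by
  classical
  obtain ⟨ψ1, hψ1⟩ := h1
  obtain ⟨ψ2, hψ2⟩ := h2
  have hvmem : v ∈ G1.verts ∩ G2.verts := by rw [hv]; rfl
  have hv1 : v ∈ G1.verts := hvmem.1
  have hv2 : v ∈ G2.verts := hvmem.2
  set S : Finset ℕ := Finset.Icc 1 N with hSdef
  set A : Finset ℕ := ψ2 ⟨v, hv2⟩ with hAdef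
  set B : Finset ℕ := ψ1 ⟨v, hv1⟩ with hBdef
  have hAS : A ⊆ S := hψ2.1.1 _
  have hBS : B ⊆ S := hψ1.1.1 _
  have hcard : A.card = B.card := by
    have ha := hψ2.2 ⟨v, hv2⟩
    have hb := hψ1.2 ⟨v, hv1⟩
    have : ((A.card : ℚ)) = (B.card : ℚ) := by rw [ha, hb]
    exact_mod_cast this
  have hcard' : (S \ A).card = (S \ B).card := by
    rw [Finset.card_sdiff_of_subset hAS, Finset.card_sdiff_of_subset hBS, hcard]
  let e1 := Finset.equivOfCardEq hcard
  let e2 := Finset.equivOfCardEq hcard'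
  let g : ℕ → ℕ := fun n =>
    if h : n ∈ A then (e1 ⟨n, h⟩ : ℕ)
    else if h' : n ∈ S \ A then (e2 ⟨n, h'⟩ : ℕ)
    else n
  have hgA : ∀ n (h : n ∈ A), g n = (e1 ⟨n, h⟩ : ℕ) := by
    intro n h; simp only [g, dif_pos h]
  have hgA' : ∀ n (h : n ∈ S \ A), g n = (e2 ⟨n, h⟩ : ℕ) := by
    intro n h
    simp only [g, dif_neg (Finset.mem_sdiff.mp h).2, dif_pos h]
  have hg_mem : ∀ n ∈ S, g n ∈ S := by
    intro n hn
    by_cases h : n ∈ A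
    · rw [hgA n h]; exact hBS (Finset.coe_mem _)
    · have h' : n ∈ S \ A := Finset.mem_sdiff.mpr ⟨hn, h⟩
      rw [hgA' n h']
      exact (Finset.mem_sdiff.mp (Finset.coe_mem (e2 ⟨n, h'⟩))).1
  have hg_inj : Set.InjOn g (S : Set ℕ) := by
    intro a ha b hb hab
    by_cases hA1 : a ∈ A <;> by_cases hB1 : b ∈ A
    · rw [hgA a hA1, hgA b hB1] at hab
      have := e1.injective (Subtype.coe_injective hab)
      exact congrArg Subtype.val this
    · have hb' : b ∈ S \ A := Finset.mem_sdiff.mpr ⟨hb, hB1⟩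
      rw [hgA a hA1, hgA' b hb'] at hab
      have h1m : (e1 ⟨a, hA1⟩ : ℕ) ∈ B := Finset.coe_mem _
      have h2m : (e2 ⟨b, hb'⟩ : ℕ) ∈ S \ B := Finset.coe_mem _
      rw [hab] at h1m
      exact ((Finset.mem_sdiff.mp h2m).2 h1m).elim
    · have ha' : a ∈ S \ A := Finset.mem_sdiff.mpr ⟨ha, hA1⟩
      rw [hgA' a ha', hgA b hB1] at hab
      have h1m : (e1 ⟨b, hB1⟩ : ℕ) ∈ B := Finset.coe_mem _
      have h2m : (e2 ⟨a, ha'⟩ : ℕ) ∈ S \ B := Finset.coe_mem _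
      rw [← hab] at h1m
      exact ((Finset.mem_sdiff.mp h2m).2 h1m).elim
    · have ha' : a ∈ S \ A := Finset.mem_sdiff.mpr ⟨ha, hA1⟩
      have hb' : b ∈ S \ A := Finset.mem_sdiff.mpr ⟨hb, hB1⟩
      rw [hgA' a ha', hgA' b hb'] at hab
      have := e2.injective (Subtype.coe_injective hab)
      exact congrArg Subtype.val this
  have himg_card : ∀ s : Finset ℕ, s ⊆ S → (s.image g).card = s.card := by
    intro s hs
    exact Finset.card_image_of_injOn (hg_inj.mono (by exact_mod_cast hs))
  have hg_image : A.image g = B := by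
    apply Finset.eq_of_subset_of_card_le
    · intro b hb
      obtain ⟨a, ha, rfl⟩ := Finset.mem_image.mp hb
      rw [hgA a ha]; exact Finset.coe_mem _
    · rw [himg_card A hAS, hcard]
  have hdisj_img : ∀ s t : Finset ℕ, s ⊆ S → t ⊆ S → Disjoint s t →
      Disjoint (s.image g) (t.image g) := by
    intro s t hs ht hst
    rw [Finset.disjoint_left]
    intro a has hat
    obtain ⟨b, hb, rfl⟩ := Finset.mem_image.mp has
    obtain ⟨c, hc, hcb⟩ := Finset.mem_image.mp hat
    have : c = b := hg_inj (ht hc) (hs hb) hcb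
    subst this
    exact (Finset.disjoint_left.mp hst hb) hc
  have hall : ∀ u : V, u ∈ G1.verts ∪ G2.verts := by
    intro u
    have : (G1 ⊔ G2).verts = (⊤ : G.Subgraph).verts := by rw [hunion]
    rw [SimpleGraph.Subgraph.verts_sup, SimpleGraph.Subgraph.verts_top] at this
    rw [this]; trivial
  refine ⟨fun u => if h : u ∈ G1.verts then ψ1 ⟨u, h⟩
    else if h' : u ∈ G2.verts then (ψ2 ⟨u, h'⟩).image g else ∅, ?_, ?_, ?_⟩
  · intro u
    by_cases h : u ∈ G1.verts
    · simp only [dif_pos h]; exact hψ1.1.1 _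
    · have h' : u ∈ G2.verts := (hall u).resolve_left h
      simp only [dif_neg h, dif_pos h']
      intro a ha
      obtain ⟨b, hb, rfl⟩ := Finset.mem_image.mp ha
      exact hg_mem b (hψ2.1.1 _ hb)
  · intro u w hadj
    have hadj' : (G1 ⊔ G2).Adj u w := by rw [hunion]; exact hadj
    rcases (SimpleGraph.Subgraph.sup_adj.mp hadj') with h12 | h12
    · have hu : u ∈ G1.verts := G1.edge_vert h12
      have hw : w ∈ G1.verts := G1.edge_vert h12.symm
      simp only [dif_pos hu, dif_pos hw]
      exact hψ1.1.2.1 ⟨u, hu⟩ ⟨w, hw⟩ h12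
    · have hu : u ∈ G2.verts := G2.edge_vert h12
      have hw : w ∈ G2.verts := G2.edge_vert h12.symm
      have hdisj2 : Disjoint (ψ2 ⟨u, hu⟩) (ψ2 ⟨w, hw⟩) :=
        hψ2.1.2.1 ⟨u, hu⟩ ⟨w, hw⟩ h12
      by_cases hu1 : u ∈ G1.verts <;> by_cases hw1 : w ∈ G1.verts
      · -- both = v, contradiction
        have hu' : u = v := by
          have : u ∈ G1.verts ∩ G2.verts := ⟨hu1, hu⟩
          rwa [hv] at this
        have hw' : w = v := by
          have : w ∈ G1.verts ∩ G2.verts := ⟨hw1, hw⟩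
          rwa [hv] at this
        exact absurd (hu' ▸ hw' ▸ hadj) (G.irrefl)
      · have hu' : u = v := by
          have : u ∈ G1.verts ∩ G2.verts := ⟨hu1, hu⟩
          rwa [hv] at this
        subst hu'
        simp only [dif_pos hu1, dif_neg hw1, dif_pos hw]
        have : ψ1 ⟨u, hu1⟩ = A.image g := by rw [hg_image]
        rw [this]
        exact hdisj_img _ _ hAS (hψ2.1.1 _) (by
          have : A = ψ2 ⟨u, hu⟩ := rfl
          rw [this]; exact hdisj2)
      · have hw' : w = v := by
          have : w ∈ G1.verts ∩ G2.verts := ⟨hw1, hw⟩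
          rwa [hv] at this
        subst hw'
        simp only [dif_neg hu1, dif_pos hu, dif_pos hw1]
        have : ψ1 ⟨w, hw1⟩ = A.image g := by rw [hg_image]
        rw [this]
        exact (hdisj_img _ _ hAS (hψ2.1.1 _) (by
          have : A = ψ2 ⟨w, hw⟩ := rfl
          rw [this]; exact hdisj2.symm)).symm
      · simp only [dif_neg hu1, dif_neg hw1, dif_pos hu, dif_pos hw]
        exact hdisj_img _ _ (hψ2.1.1 _) (hψ2.1.1 _) hdisj2
  · intro u
    by_cases h : u ∈ G1.verts
    · simp only [dif_pos h]
      exact le_of_eq (hψ1.2 ⟨u, h⟩).symm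
    · have h' : u ∈ G2.verts := (hall u).resolve_left h
      simp only [dif_neg h, dif_pos h']
      rw [himg_card _ (hψ2.1.1 _)]
      exact le_of_eq (hψ2.2 ⟨u, h'⟩).symm
end

section
/- Let G be a finite simple graph, v a vertex of G of degree at most 2, x ∈ ℚ with 0 ≤ x ≤ 1/2, and N a common denominator of the constant function c_x. If G − v has a tight (c_x,N)-coloring ψ, then ψ extends to an (f,N)-coloring of G, where f(v) = 1 − 2x and f(u) = x for every vertex u ≠ v. -/
open MeasureTheory

/-- If `v` has degree at most 2 in `G`, `0 ≤ x ≤ 1/2`, `N` is a common denominator of `c_x`,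
and `G − v` has a tight `(c_x,N)`-coloring `ψ`, then `ψ` extends to an `(f,N)`-coloring of
`G` where `f(v) = 1 − 2x` and `f(u) = x` for `u ≠ v`. -/
theorem stmt8 {V : Type*} [Fintype V] [DecidableEq V] (G : SimpleGraph V)
    [DecidableRel G.Adj] (v : V) (hdeg : G.degree v ≤ 2)
    (x : ℚ) (hx0 : 0 ≤ x) (hx1 : x ≤ 1/2)
    (N : ℕ) (hN : IsCommonDenom N (fun _ : V => x))
    (ψ : ↥({u : V | u ≠ v}) → Finset ℕ)
    (hψ : IsTightFNColoring (G.induce {u : V | u ≠ v}) (fun _ => x) N ψ) :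
    ∃ ψ' : V → Finset ℕ,
      IsFNColoring G (fun u => if u = v then 1 - 2 * x else x) N ψ' ∧
      ∀ u (hu : u ≠ v), ψ' u = ψ ⟨u, hu⟩ := by
  obtain ⟨⟨hsub, hdisj, hcard⟩, htight⟩ := hψ
  set T : V → Finset ℕ := fun w => if h : w = v then ∅ else ψ ⟨w, h⟩ with hT
  set S : Finset ℕ := (G.neighborFinset v).biUnion T with hS
  set ψ' : V → Finset ℕ := fun u => if h : u = v then (Finset.Icc 1 N) \ S else ψ ⟨u, h⟩
    with hψ'
  have hψ'v : ψ' v = (Finset.Icc 1 N) \ S := by simp [hψ']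
  have hψ'u : ∀ u (hu : u ≠ v), ψ' u = ψ ⟨u, hu⟩ := by intro u hu; simp [hψ', hu]
  have hTsub : ∀ w ∈ G.neighborFinset v, T w ⊆ S := fun w hw =>
    Finset.subset_biUnion_of_mem T hw
  refine ⟨ψ', ⟨?_, ?_, ?_⟩, hψ'u⟩
  · intro u
    by_cases hu : u = v
    · subst hu; rw [hψ'v]; exact Finset.sdiff_subset
    · rw [hψ'u u hu]; exact hsub _
  · intro a b hab
    have hne : a ≠ b := hab.ne
    by_cases ha : a = v
    · rw [ha] at hab ⊢
      have hbv : b ≠ v := fun h => hab.ne h.symm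
      rw [hψ'v, hψ'u b hbv]
      have hbmem : b ∈ G.neighborFinset v := by
        rw [SimpleGraph.mem_neighborFinset]; exact hab
      have hsubS : ψ ⟨b, hbv⟩ ⊆ S := by
        have := hTsub b hbmem
        simpa [hT, hbv] using this
      exact Finset.sdiff_disjoint.mono_right hsubS
    · by_cases hb : b = v
      · rw [hb] at hab ⊢
        rw [hψ'v, hψ'u a ha]
        have hamem : a ∈ G.neighborFinset v := by
          rw [SimpleGraph.mem_neighborFinset]; exact hab.symm
        have hsubS : ψ ⟨a, ha⟩ ⊆ S := by
          have := hTsub a hamem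
          simpa [hT, ha] using this
        exact (Finset.sdiff_disjoint.mono_right hsubS).symm
      · rw [hψ'u a ha, hψ'u b hb]
        exact hdisj ⟨a, ha⟩ ⟨b, hb⟩ hab
  · intro u
    by_cases hu : u = v
    · rw [hu]
      show (N:ℚ) * (if v = v then 1 - 2*x else x) ≤ ((ψ' v).card : ℚ)
      rw [if_pos rfl, hψ'v]
      have hScard : ((S.card : ℚ)) ≤ 2 * ((N : ℚ) * x) := by
        have h1 : S.card ≤ ∑ w ∈ G.neighborFinset v, (T w).card :=
          Finset.card_biUnion_le
        have h2 : ∀ w ∈ G.neighborFinset v, ((T w).card : ℚ) = (N : ℚ) * x := by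
          intro w hw
          have hwv : w ≠ v := by
            intro h; subst h
            exact G.irrefl (SimpleGraph.mem_neighborFinset .. |>.mp hw)
          simp only [hT, dif_neg hwv]
          exact htight ⟨w, hwv⟩
        calc ((S.card : ℚ)) ≤ ((∑ w ∈ G.neighborFinset v, (T w).card : ℕ) : ℚ) := by
              exact_mod_cast h1
          _ = ∑ w ∈ G.neighborFinset v, ((T w).card : ℚ) := by push_cast; ring
          _ = (G.neighborFinset v).card * ((N : ℚ) * x) := by
              rw [Finset.sum_congr rfl h2, Finset.sum_const, nsmul_eq_mul]
          _ ≤ 2 * ((N : ℚ) * x) := by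
              have : ((G.neighborFinset v).card : ℚ) ≤ 2 := by
                exact_mod_cast hdeg
              have hnn : (0:ℚ) ≤ (N : ℚ) * x := by positivity
              exact mul_le_mul_of_nonneg_right this hnn
      have hcardN : (Finset.Icc 1 N).card = N := by simp
      have hge : (N : ℚ) - (S.card : ℚ) ≤ (((Finset.Icc 1 N) \ S).card : ℚ) := by
        have := Finset.le_card_sdiff S (Finset.Icc 1 N)
        have h3 : N - S.card ≤ ((Finset.Icc 1 N) \ S).card := by
          rw [hcardN] at this; exact this
        have := Nat.cast_le (α := ℚ) |>.mpr h3
        calc (N : ℚ) - (S.card : ℚ) ≤ ((N - S.card : ℕ) : ℚ) := by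
              rcases le_or_gt S.card N with h | h
              · rw [Nat.cast_sub h]
              · have : (N:ℚ) ≤ (S.card:ℚ) := by exact_mod_cast h.le
                have : (N:ℚ) - S.card ≤ 0 := by linarith
                exact this.trans (by positivity)
          _ ≤ _ := by exact_mod_cast h3
      have : (N : ℚ) * (1 - 2 * x) = (N : ℚ) - 2 * ((N:ℚ) * x) := by ring
      rw [this]
      linarith
    · simp only [if_neg hu]
      rw [hψ'u u hu]
      exact hcard ⟨u, hu⟩
end

section
/- Let G be a finite simple graph containing distinct vertices v_1, v_2, v_3, v_4, v_5 and pairwise distinct vertices x_1, x_2, x_3, x_4 with x_i ∉ {v_1,…,v_5} for each i, such that v_1v_2, v_2v_3, v_3v_4, v_4v_5, v_5v_1 are edges of G, and for each i ∈ {1,2,3,4} the neighborhood of v_i in G is exactly {v_{i−1}, v_{i+1}, x_i} (indices modulo 5, with v_0 = v_5). Let b ∈ ℚ with 1/3 ≤ b ≤ 1/2 and let N be a common denominator of the constant function c_b. Suppose the graph H = G − {v_1, v_2, v_3, v_4} has a tight (c_b,N)-coloring ψ satisfying ψ(x_2) = ψ(v_5) and ψ(x_3) = ψ(x_4). Then G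 has an (f,N)-coloring that agrees with ψ on V(H), where f(v_i) = 1 − 2b for i ∈ {1,2,3,4} and f(u) = b for every other vertex u. -/
/-! Let `k = N b` be the common size of the colour sets of `ψ`, so that `2k ≤ N ≤ 3k`, and put
`m = N - 2k ≤ k`. With `A = ψ(v₅) = ψ(x₂)`, `B = ψ(x₁)` and `C = ψ(x₃) = ψ(x₄)`, colour the path
`v₁v₂v₃v₄` greedily by `m`-subsets of `{1,…,N}`: `S₁` avoiding `A ∪ B`, `S₂` avoiding `A ∪ S₁`,
`S₃` avoiding `C ∪ S₂` and `S₄` avoiding `A ∪ C ∪ S₃`. Each forbidden set must have at most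
`N - m = 2k` elements; for the last one this holds once `S₃` is taken inside `A` as far as possible
(`S₂` misses `A`), since then either `S₃ ⊆ A` or `A ⊆ C ∪ S₃`. -/

open MeasureTheory

open Finset SimpleGraph

namespace Finset

variable {α : Type*} [DecidableEq α]

theorem exists_subset_card_eq_disjoint {U X : Finset α} {m : ℕ} (h : #X + m ≤ #U) :
    ∃ S ⊆ U, Disjoint S X ∧ #S = m := by
  obtain ⟨S, hS, hSm⟩ := exists_subset_card_eq (s := U \ X) (n := m)
    (by have := le_card_sdiff X U; omega)
  exact ⟨S, hS.trans sdiff_subset, disjoint_of_subset_left hS sdiff_disjoint, hSm⟩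

theorem exists_subset_card_eq_and_subset_or_inter_subset {W : Finset α} (A : Finset α) {m : ℕ}
    (hm : m ≤ #W) : ∃ S ⊆ W, #S = m ∧ (S ⊆ A ∨ W ∩ A ⊆ S) := by
  rcases le_total m #(W ∩ A) with h | h
  · obtain ⟨S, hS, hSm⟩ := exists_subset_card_eq h
    exact ⟨S, hS.trans inter_subset_left, hSm, .inl (hS.trans inter_subset_right)⟩
  · obtain ⟨S, hWS, hSW, hSm⟩ := exists_subsuperset_card_eq inter_subset_left h hm
    exact ⟨S, hSW, hSm, .inr hWS⟩

theorem exists_path_sets {U A B C : Finset α} {k m : ℕ} (hAU : A ⊆ U) (hA : #A ≤ k) (hB : #B ≤ k)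
    (hC : #C ≤ k) (hmk : m ≤ k) (hU : 2 * k + m ≤ #U) :
    ∃ S₁ S₂ S₃ S₄ : Finset α, (S₁ ⊆ U ∧ S₂ ⊆ U ∧ S₃ ⊆ U ∧ S₄ ⊆ U) ∧
      (#S₁ = m ∧ #S₂ = m ∧ #S₃ = m ∧ #S₄ = m) ∧
      Disjoint S₁ (A ∪ B) ∧ Disjoint S₂ (A ∪ S₁) ∧ Disjoint S₃ (C ∪ S₂) ∧
      Disjoint S₄ (A ∪ C ∪ S₃) := by
  obtain ⟨S₁, hS₁U, hS₁, hS₁m⟩ := exists_subset_card_eq_disjoint (U := U) (X := A ∪ B) (m := m)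
    (by have := card_union_le A B; omega)
  obtain ⟨S₂, hS₂U, hS₂, hS₂m⟩ := exists_subset_card_eq_disjoint (U := U) (X := A ∪ S₁) (m := m)
    (by have := card_union_le A S₁; omega)
  obtain ⟨S₃, hS₃W, hS₃m, hS₃A⟩ :=
    exists_subset_card_eq_and_subset_or_inter_subset (W := U \ (C ∪ S₂)) A (m := m)
      (by have := le_card_sdiff (C ∪ S₂) U; have := card_union_le C S₂; omega)
  have hACS₃ : #(A ∪ C ∪ S₃) ≤ 2 * k := by
    rcases hS₃A with hS₃A | hS₃A
    · rw [union_eq_left.2 (hS₃A.trans subset_union_left)]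
      have := card_union_le A C; omega
    · have hA' : A ⊆ C ∪ S₃ := fun a ha => by
        by_cases haC : a ∈ C
        · exact mem_union_left _ haC
        · refine mem_union_right _ (hS₃A (mem_inter.2 ⟨mem_sdiff.2 ⟨hAU ha, ?_⟩, ha⟩))
          simpa [haC] using disjoint_right.1 hS₂ (mem_union_left _ ha)
      rw [union_assoc, union_eq_right.2 hA']
      have := card_union_le C S₃; omega
  obtain ⟨S₄, hS₄U, hS₄, hS₄m⟩ :=
    exists_subset_card_eq_disjoint (U := U) (X := A ∪ C ∪ S₃) (m := m) (by omega)
  exact ⟨S₁, S₂, S₃, S₄, ⟨hS₁U, hS₂U, hS₃W.trans sdiff_subset, hS₄U⟩, ⟨hS₁m, hS₂m, hS₃m, hS₄m⟩,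
    hS₁, hS₂, disjoint_of_subset_left hS₃W sdiff_disjoint, hS₄⟩

end Finset

namespace SimpleGraph

theorem forall_adj_of_neighborSet_eq {V : Type*} {G : SimpleGraph V} {v a b c : V}
    {P : V → Prop} (h : G.neighborSet v = {a, b, c}) (ha : P a) (hb : P b) (hc : P c) :
    ∀ w, G.Adj v w → P w := by
  intro w hw
  have hw' : w ∈ G.neighborSet v := hw
  rw [h] at hw'
  rcases hw' with rfl | rfl | rfl <;> assumption

theorem forall_adj_disjoint_of_neighborSet_eq {V : Type*} {G : SimpleGraph V} {φ : V → Finset ℕ}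
    {v1 v2 v3 v4 v5 x1 x2 x3 x4 : V} (hN1 : G.neighborSet v1 = {v5, v2, x1})
    (hN2 : G.neighborSet v2 = {v1, v3, x2}) (hN3 : G.neighborSet v3 = {v2, v4, x3})
    (hN4 : G.neighborSet v4 = {v3, v5, x4}) (h15 : Disjoint (φ v1) (φ v5))
    (h1x : Disjoint (φ v1) (φ x1)) (h21 : Disjoint (φ v2) (φ v1)) (h2x : Disjoint (φ v2) (φ x2))
    (h32 : Disjoint (φ v3) (φ v2)) (h3x : Disjoint (φ v3) (φ x3)) (h43 : Disjoint (φ v4) (φ v3))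
    (h45 : Disjoint (φ v4) (φ v5)) (h4x : Disjoint (φ v4) (φ x4)) :
    ∀ v ∈ ({v1, v2, v3, v4} : Set V), ∀ w, G.Adj v w → Disjoint (φ v) (φ w) := by
  rintro v (rfl | rfl | rfl | rfl)
  · exact forall_adj_of_neighborSet_eq hN1 h15 h21.symm h1x
  · exact forall_adj_of_neighborSet_eq hN2 h21 h32.symm h2x
  · exact forall_adj_of_neighborSet_eq hN3 h32 h43.symm h3x
  · exact forall_adj_of_neighborSet_eq hN4 h43 h45 h4x

theorem isFNColoring_of_eq_on_compl {V : Type*} {G : SimpleGraph V} {S : Set V} {f : V → ℚ}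
    {g : {u | u ∉ S} → ℚ} {N : ℕ} {ψ : {u | u ∉ S} → Finset ℕ} {φ : V → Finset ℕ}
    (hψ : IsFNColoring (G.induce {u | u ∉ S}) g N ψ) (hfg : ∀ u : {u | u ∉ S}, f u ≤ g u)
    (hφψ : ∀ u (hu : u ∉ S), φ u = ψ ⟨u, hu⟩) (hsub : ∀ v ∈ S, φ v ⊆ Icc 1 N)
    (hdisj : ∀ v ∈ S, ∀ w, G.Adj v w → Disjoint (φ v) (φ w))
    (hcard : ∀ v ∈ S, N * f v ≤ #(φ v)) : IsFNColoring G f N φ := by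
  refine ⟨fun v => ?_, fun u w huw => ?_, fun v => ?_⟩
  · by_cases hv : v ∈ S
    · exact hsub v hv
    · exact hφψ v hv ▸ hψ.1 ⟨v, hv⟩
  · by_cases hu : u ∈ S
    · exact hdisj u hu w huw
    by_cases hw : w ∈ S
    · exact (hdisj w hw u huw.symm).symm
    rw [hφψ u hu, hφψ w hw]
    exact hψ.2.1 ⟨u, hu⟩ ⟨w, hw⟩ huw
  · by_cases hv : v ∈ S
    · exact hcard v hv
    calc (N : ℚ) * f v ≤ N * g ⟨v, hv⟩ := by gcongr; exact hfg ⟨v, hv⟩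
      _ ≤ #(φ v) := hφψ v hv ▸ hψ.2.2 ⟨v, hv⟩

end SimpleGraph

theorem two_mul_le_and_le_three_mul {N k : ℕ} {b : ℚ} (hk : (k : ℚ) = N * b) (hb1 : 1 / 3 ≤ b)
    (hb2 : b ≤ 1 / 2) : 2 * k ≤ N ∧ N ≤ 3 * k := by
  have hN : (0 : ℚ) ≤ N := N.cast_nonneg
  constructor
  · exact_mod_cast (by nlinarith : (2 * k : ℚ) ≤ N)
  · exact_mod_cast (by nlinarith : (N : ℚ) ≤ 3 * k)

theorem stmt10_general {V : Type*} [DecidableEq V] (G : SimpleGraph V)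
    (v1 v2 v3 v4 v5 x1 x2 x3 x4 : V)
    (hnodup : ([v1, v2, v3, v4, v5, x1, x2, x3, x4] : List V).Nodup)
    (hN1 : G.neighborSet v1 = {v5, v2, x1})
    (hN2 : G.neighborSet v2 = {v1, v3, x2})
    (hN3 : G.neighborSet v3 = {v2, v4, x3})
    (hN4 : G.neighborSet v4 = {v3, v5, x4})
    (b : ℚ) (hb1 : 1/3 ≤ b) (hb2 : b ≤ 1/2)
    (N : ℕ)
    (hv5S : v5 ∉ ({v1, v2, v3, v4} : Set V))
    (hx2S : x2 ∉ ({v1, v2, v3, v4} : Set V))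
    (hx3S : x3 ∉ ({v1, v2, v3, v4} : Set V))
    (hx4S : x4 ∉ ({v1, v2, v3, v4} : Set V))
    (ψ : ↥({u : V | u ∉ ({v1, v2, v3, v4} : Set V)}) → Finset ℕ)
    (hψ : IsTightFNColoring (G.induce {u : V | u ∉ ({v1, v2, v3, v4} : Set V)})
      (fun _ => b) N ψ)
    (hψ25 : ψ ⟨x2, hx2S⟩ = ψ ⟨v5, hv5S⟩)
    (hψ34 : ψ ⟨x3, hx3S⟩ = ψ ⟨x4, hx4S⟩) :
    ∃ ψ' : V → Finset ℕ,
      IsFNColoring G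
        (fun u => if u = v1 ∨ u = v2 ∨ u = v3 ∨ u = v4 then 1 - 2 * b else b) N ψ' ∧
      ∀ u (hu : u ∉ ({v1, v2, v3, v4} : Set V)), ψ' u = ψ ⟨u, hu⟩ := by
  simp only [List.nodup_cons, List.mem_cons, List.not_mem_nil, not_or, or_false] at hnodup
  obtain ⟨⟨h12, h13, h14, -, h1x, -⟩, ⟨h23, h24, -, h2x, -⟩, ⟨h34, -, h3x, -⟩, ⟨-, h4x, -⟩, -⟩ :=
    hnodup
  have hx1S : x1 ∉ ({v1, v2, v3, v4} : Set V) := by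
    simp [Ne.symm h1x, Ne.symm h2x, Ne.symm h3x, Ne.symm h4x]
  set k := #(ψ ⟨v5, hv5S⟩)
  have hk : (k : ℚ) = N * b := hψ.2 _
  have hcard : ∀ z, #(ψ z) = k := fun z => by exact_mod_cast (hψ.2 z).trans hk.symm
  obtain ⟨h2k, h3k⟩ := two_mul_le_and_le_three_mul hk hb1 hb2
  have hm : (N : ℚ) * (1 - 2 * b) = (N - 2 * k : ℕ) := by push_cast [h2k]; linarith
  obtain ⟨S₁, S₂, S₃, S₄, hSU, hSm, hS₁, hS₂, hS₃, hS₄⟩ :=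
    exists_path_sets (U := Icc 1 N) (B := ψ ⟨x1, hx1S⟩) (C := ψ ⟨x4, hx4S⟩) (hψ.1.1 _)
      le_rfl (hcard _).le (hcard _).le (m := N - 2 * k) (by omega) (by simp; omega)
  simp only [disjoint_union_right] at hS₁ hS₂ hS₃ hS₄
  set φ := Function.update (Function.update (Function.update (Function.update
    (Function.extend Subtype.val ψ fun _ => ∅) v1 S₁) v2 S₂) v3 S₃) v4 S₄
  have hφ : φ v1 = S₁ ∧ φ v2 = S₂ ∧ φ v3 = S₃ ∧ φ v4 = S₄ := by
    simp [φ, h12, h13, h14, h23, h24, h34]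
  have hφψ : ∀ u (hu : u ∉ ({v1, v2, v3, v4} : Set V)), φ u = ψ ⟨u, hu⟩ := by
    intro u hu
    simp only [Set.mem_insert_iff, Set.mem_singleton_iff, not_or] at hu
    simp only [φ, Function.update_apply, hu, if_false]
    exact Subtype.val_injective.extend_apply ψ _ ⟨u, _⟩
  refine ⟨φ, isFNColoring_of_eq_on_compl hψ.1 (fun _ => by split_ifs <;> linarith) hφψ ?_ ?_ ?_,
    hφψ⟩
  · rintro v (rfl | rfl | rfl | rfl) <;> simp [hφ, hSU]
  · refine forall_adj_disjoint_of_neighborSet_eq hN1 hN2 hN3 hN4 ?_ ?_ ?_ ?_ ?_ ?_ ?_ ?_ ?_ <;>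
      simp only [hφ, hφψ _ hv5S, hφψ _ hx1S, hφψ _ hx2S, hφψ _ hx3S, hφψ _ hx4S, hψ25, hψ34,
        hS₁, hS₂, hS₃, hS₄]
  · rintro v (rfl | rfl | rfl | rfl) <;> simp [hφ, hSm, hm]

/-- Extension of a tight `(c_b,N)`-coloring of `G − {v₁,v₂,v₃,v₄}` (identified suitably,
i.e. with `ψ(x₂) = ψ(v₅)` and `ψ(x₃) = ψ(x₄)`) to an `(f,N)`-coloring of `G`, where
`f = 1 − 2b` on `{v₁,v₂,v₃,v₄}` and `f = b` elsewhere.  Here `v₁v₂v₃v₄v₅` is a 5-cycle,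
each `vᵢ` (for `i ≤ 4`) has neighborhood exactly `{vᵢ₋₁, vᵢ₊₁, xᵢ}`, the nine listed
vertices are pairwise distinct, and `1/3 ≤ b ≤ 1/2`. -/
theorem stmt10 {V : Type*} [Fintype V] [DecidableEq V] (G : SimpleGraph V)
    (v1 v2 v3 v4 v5 x1 x2 x3 x4 : V)
    (hnodup : ([v1, v2, v3, v4, v5, x1, x2, x3, x4] : List V).Nodup)
    (e12 : G.Adj v1 v2) (e23 : G.Adj v2 v3) (e34 : G.Adj v3 v4)
    (e45 : G.Adj v4 v5) (e51 : G.Adj v5 v1)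
    (hN1 : G.neighborSet v1 = {v5, v2, x1})
    (hN2 : G.neighborSet v2 = {v1, v3, x2})
    (hN3 : G.neighborSet v3 = {v2, v4, x3})
    (hN4 : G.neighborSet v4 = {v3, v5, x4})
    (b : ℚ) (hb1 : 1/3 ≤ b) (hb2 : b ≤ 1/2)
    (N : ℕ) (hN : IsCommonDenom N (fun _ : V => b))
    (hv5S : v5 ∉ ({v1, v2, v3, v4} : Set V))
    (hx2S : x2 ∉ ({v1, v2, v3, v4} : Set V))
    (hx3S : x3 ∉ ({v1, v2, v3, v4} : Set V))
    (hx4S : x4 ∉ ({v1, v2, v3, v4} : Set V))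
    (ψ : ↥({u : V | u ∉ ({v1, v2, v3, v4} : Set V)}) → Finset ℕ)
    (hψ : IsTightFNColoring (G.induce {u : V | u ∉ ({v1, v2, v3, v4} : Set V)})
      (fun _ => b) N ψ)
    (hψ25 : ψ ⟨x2, hx2S⟩ = ψ ⟨v5, hv5S⟩)
    (hψ34 : ψ ⟨x3, hx3S⟩ = ψ ⟨x4, hx4S⟩) :
    ∃ ψ' : V → Finset ℕ,
      IsFNColoring G
        (fun u => if u = v1 ∨ u = v2 ∨ u = v3 ∨ u = v4 then 1 - 2 * b else b) N ψ' ∧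
      ∀ u (hu : u ∉ ({v1, v2, v3, v4} : Set V)), ψ' u = ψ ⟨u, hu⟩ :=
  stmt10_general G v1 v2 v3 v4 v5 x1 x2 x3 x4 hnodup hN1 hN2 hN3 hN4 b hb1 hb2 N hv5S hx2S hx3S hx4S
    ψ hψ hψ25 hψ34
end
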